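/- arXiv:2403.00399 — 4 statements merged into one kernel-verified Lean document; each statement's English description precedes it below -/
import Mathlib

section
/- Let (V,E) be a finite directed graph in which every vertex has at least one outgoing edge, let v_0 ∈ V, let w_1,…,w_t : E → ℕ be weight functions, T_1,…,T_t ⊆ V target sets, and d_1,…,d_t ∈ (ℕ∖{0}) ∪ {+∞} bounds. Then there exists an infinite path π from v_0 with cost_i(π) < d_i for all i ∈ {1,…,t} if and only if there exists a lasso π′ = μ(ν)^ω from v_0 with |μν| ≤ (t+2)·|V| and cost_i(π′) < d_i for all i ∈ {1,…,t}. -/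
open scoped Classical

/-- An infinite path in the graph with edge relation `E`. -/
def IsPlay {V : Type*} (E : V → V → Prop) (π : ℕ → V) : Prop :=
  ∀ k, E (π k) (π (k + 1))

/-- The accumulated weight of the first `n` edges of `π`. -/
def pathWeight {V : Type*} (w : V → V → ℕ) (π : ℕ → V) (n : ℕ) : ℕ :=
  ∑ j ∈ Finset.range n, w (π j) (π (j + 1))

/-- The cost of an infinite path for weight function `w` and target set `T`: the
accumulated weight up to the first visit of `T`, and `+∞` if `T` is never visited. -/
noncomputable def cost {V : Type*} (w : V → V → ℕ) (T : Set V) (π : ℕ → V) : ℕ∞ :=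
  if h : ∃ n, π n ∈ T then (pathWeight w π (Nat.find h) : ℕ∞) else ⊤

/-- `π` is a lasso `μ (ν)^ω` where `|μ| = a` and `|ν| = b`. -/
def IsLasso {V : Type*} (π : ℕ → V) (a b : ℕ) : Prop :=
  0 < b ∧ ∀ k, a ≤ k → π (k + b) = π k

theorem pathWeight_mono' {V : Type*} (w : V → V → ℕ) (π : ℕ → V) {m n : ℕ} (h : m ≤ n) :
    pathWeight w π m ≤ pathWeight w π n :=
  Finset.sum_le_sum_of_subset (Finset.range_subset_range.mpr h)

theorem pathWeight_congr' {V : Type*} (w : V → V → ℕ) {π π' : ℕ → V} {n : ℕ}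
    (h : ∀ r ≤ n, π r = π' r) : pathWeight w π n = pathWeight w π' n :=
  Finset.sum_congr rfl fun j hj => by
    have hj' := Finset.mem_range.mp hj
    rw [h j (by omega), h (j + 1) (by omega)]

theorem cost_le_of_mem {V : Type*} (w : V → V → ℕ) (T : Set V) (π : ℕ → V) {n : ℕ}
    (hn : π n ∈ T) : cost w T π ≤ (pathWeight w π n : ℕ∞) := by
  have h : ∃ n, π n ∈ T := ⟨n, hn⟩
  rw [cost, dif_pos h]
  exact_mod_cast pathWeight_mono' w π (Nat.find_le hn)

/-- There is an infinite path from `v0` with `cost_i < d_i` for all `i` iff there is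
such a lasso `μ (ν)^ω` from `v0` with `|μν| ≤ (t+2)·|V|`. -/
theorem exists_path_iff_exists_lasso {V : Type*} [Fintype V] (E : V → V → Prop)
    (hE : ∀ u, ∃ v, E u v) (v0 : V) (t : ℕ)
    (w : Fin t → V → V → ℕ) (T : Fin t → Set V) (d : Fin t → ℕ∞)
    (hd : ∀ i, d i ≠ 0) :
    (∃ π : ℕ → V, IsPlay E π ∧ π 0 = v0 ∧ ∀ i, cost (w i) (T i) π < d i) ↔
      (∃ (π : ℕ → V) (a b : ℕ), IsPlay E π ∧ π 0 = v0 ∧ IsLasso π a b ∧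
        a + b ≤ (t + 2) * Fintype.card V ∧ ∀ i, cost (w i) (T i) π < d i) := by
  constructor
  · rintro ⟨π0, hplay0, hstart0, hcost0⟩
    have hex : ∀ i, ∃ n, π0 n ∈ T i := by
      intro i
      by_contra h
      have hc := hcost0 i
      rw [cost, dif_neg h] at hc
      exact not_top_lt hc
    -- the set of "good" path/hit-time pairs
    set Good : (ℕ → V) → (Fin t → ℕ) → Prop := fun π m =>
      IsPlay E π ∧ π 0 = v0 ∧
        ∀ i, π (m i) ∈ T i ∧ (pathWeight (w i) π (m i) : ℕ∞) < d i with hGoodDef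
    have hGood0 : ∃ s : ℕ, ∃ π m, Good π m ∧ ∑ i, m i = s := by
      refine ⟨_, π0, fun i => Nat.find (hex i),
        ⟨hplay0, hstart0, fun i => ⟨Nat.find_spec (hex i), ?_⟩⟩, rfl⟩
      have hc := hcost0 i
      rwa [cost, dif_pos (hex i)] at hc
    obtain ⟨π, m, ⟨hplay, hstart, hgm⟩, hsum⟩ := Nat.find_spec hGood0
    -- no splicable cycle: between any repetition of a vertex before the last hit time,
    -- there is a hit time
    have hns : ∀ j k : ℕ, j < k → π j = π k → (∃ i, k ≤ m i) →
        ∃ i, j < m i ∧ m i ≤ k := by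
      intro j k hjk hπjk h1
      by_contra hcon
      push_neg at hcon
      set b := k - j with hbdef
      have hbpos : 0 < b := by omega
      have hjb : j + b = k := by omega
      set π' : ℕ → V := fun n => if n < j then π n else π (n + b) with hπ'def
      have hag : ∀ r ≤ j, π' r = π r := by
        intro r hr
        show (if r < j then π r else π (r + b)) = π r
        rcases lt_or_eq_of_le hr with h | h
        · rw [if_pos h]
        · rw [if_neg (by omega), h, hjb, ← hπjk]
      have hπ'ge : ∀ n, j ≤ n → π' n = π (n + b) := by
        intro n hn
        show (if n < j then π n else π (n + b)) = π (n + b)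
        rw [if_neg (by omega)]
      have hplay' : IsPlay E π' := by
        intro n
        rcases le_or_gt (n + 1) j with h | h
        · rw [hag n (by omega), hag (n + 1) h]
          exact hplay n
        · rcases le_or_gt j n with h2 | h2
          · rw [hπ'ge n h2, hπ'ge (n + 1) (by omega),
              show n + 1 + b = n + b + 1 by omega]
            exact hplay (n + b)
          · rw [hag n (by omega), hπ'ge (n + 1) (by omega)]
            have : n + 1 = j := by omega
            subst this
            rw [hjb, ← hπjk]
            exact hplay n
      have hstart' : π' 0 = v0 := by rw [hag 0 (Nat.zero_le j)]; exact hstart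
      -- weight comparison
      have hw : ∀ (wt : V → V → ℕ) (n : ℕ), j ≤ n →
          pathWeight wt π' n ≤ pathWeight wt π (n + b) := by
        intro wt n hn
        induction n, hn using Nat.le_induction with
        | base =>
          rw [pathWeight_congr' wt hag]
          exact pathWeight_mono' wt π (by omega)
        | succ n hn ih =>
          show pathWeight wt π' (n + 1) ≤ pathWeight wt π (n + 1 + b)
          rw [show n + 1 + b = n + b + 1 by omega]
          unfold pathWeight
          rw [Finset.sum_range_succ, Finset.sum_range_succ]
          have e1 : π' n = π (n + b) := hπ'ge n hn
          have e2 : π' (n + 1) = π (n + b + 1) := by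
            rw [hπ'ge (n + 1) (by omega)]; ring_nf
          rw [e1, e2]
          exact Nat.add_le_add_right ih _
      set m' : Fin t → ℕ := fun i => if m i ≤ j then m i else m i - b with hm'def
      have hgm' : ∀ i, π' (m' i) ∈ T i ∧ (pathWeight (w i) π' (m' i) : ℕ∞) < d i := by
        intro i
        obtain ⟨hmem, hwt⟩ := hgm i
        by_cases hc : m i ≤ j
        · have hm'eq : m' i = m i := if_pos hc
          rw [hm'eq]
          constructor
          · rw [hag (m i) hc]; exact hmem
          · rw [pathWeight_congr' (w i) (fun r hr => hag r (le_trans hr hc))]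
            exact hwt
        · push_neg at hc
          have hk : k < m i := hcon i hc
          have hm'eq : m' i = m i - b := if_neg (by omega)
          have hjm' : j ≤ m i - b := by omega
          rw [hm'eq]
          constructor
          · rw [hπ'ge _ hjm', show m i - b + b = m i by omega]; exact hmem
          · refine lt_of_le_of_lt ?_ hwt
            have := hw (w i) (m i - b) hjm'
            rw [show m i - b + b = m i by omega] at this
            exact_mod_cast this
      have hlt : ∑ i, m' i < ∑ i, m i := by
        obtain ⟨i0, hi0⟩ := h1
        refine Finset.sum_lt_sum ?_ ⟨i0, Finset.mem_univ i0, ?_⟩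
        · intro i _
          show (if m i ≤ j then m i else m i - b) ≤ m i
          by_cases hc : m i ≤ j
          · rw [if_pos hc]
          · rw [if_neg hc]; omega
        · show (if m i0 ≤ j then m i0 else m i0 - b) < m i0
          rw [if_neg (by omega)]
          omega
      rw [hsum] at hlt
      exact Nat.find_min hGood0 hlt ⟨π', m', ⟨hplay', hstart', hgm'⟩, rfl⟩
    -- bound on the last hit time
    set N := Finset.univ.sup m with hNdef
    have hmN : ∀ i, m i ≤ N := fun i => Finset.le_sup (Finset.mem_univ i)
    have hkey : ∀ p, p < N → ∃ i, p < m i := by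
      intro p hp
      obtain ⟨i, _, h⟩ := Finset.lt_sup_iff.mp hp
      exact ⟨i, h⟩
    have hNle : N ≤ t * Fintype.card V := by
      rcases Nat.eq_zero_or_pos N with h0 | hNpos
      · simp [h0]
      · have haux : ∀ p q : ℕ, p < q → q < N →
            (Finset.univ.filter fun i => m i ≤ p).card =
              (Finset.univ.filter fun i => m i ≤ q).card → π p = π q → False := by
          intro p q hpq hqN hcard hππ
          obtain ⟨i1, hi1⟩ := hkey q hqN
          obtain ⟨i, hi⟩ := hns p q hpq hππ ⟨i1, le_of_lt hi1⟩
          have hss : (Finset.univ.filter fun i => m i ≤ p) ⊂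
              (Finset.univ.filter fun i => m i ≤ q) := by
            refine Finset.ssubset_iff_of_subset (fun x hx => ?_) |>.mpr ?_
            · simp only [Finset.mem_filter, Finset.mem_univ, true_and] at hx ⊢
              omega
            · exact ⟨i, by simp only [Finset.mem_filter, Finset.mem_univ, true_and]; omega,
                by simp only [Finset.mem_filter, Finset.mem_univ, true_and]; omega⟩
          exact absurd hcard (Nat.ne_of_lt (Finset.card_lt_card hss))
        have hinj : Set.InjOn
            (fun p => ((Finset.univ.filter fun i => m i ≤ p).card, π p))
            (Finset.range N) := by
          intro p hp q hq hpq
          simp only [Finset.coe_range, Set.mem_Iio] at hp hq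
          simp only [Prod.mk.injEq] at hpq
          rcases lt_trichotomy p q with h | h | h
          · exact absurd (haux p q h hq hpq.1 hpq.2) not_false
          · exact h
          · exact absurd (haux q p h hp hpq.1.symm hpq.2.symm) not_false
        have hmaps : ∀ p ∈ Finset.range N,
            ((Finset.univ.filter fun i => m i ≤ p).card, π p) ∈
              Finset.range t ×ˢ (Finset.univ : Finset V) := by
          intro p hp
          rw [Finset.mem_product]
          refine ⟨Finset.mem_range.mpr ?_, Finset.mem_univ _⟩
          obtain ⟨i, hi⟩ := hkey p (Finset.mem_range.mp hp)
          have hss : (Finset.univ.filter fun i => m i ≤ p) ⊂ Finset.univ := by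
            refine Finset.ssubset_iff_of_subset (Finset.subset_univ _) |>.mpr
              ⟨i, Finset.mem_univ i, ?_⟩
            simp only [Finset.mem_filter, Finset.mem_univ, true_and]
            omega
          have := Finset.card_lt_card hss
          simpa using this
        have := Finset.card_le_card_of_injOn _ hmaps hinj
        simpa [mul_comm] using this
    -- pigeonhole on the tail to find a cycle
    obtain ⟨r, s, hrs, hπrs⟩ :
        ∃ r s : Fin (Fintype.card V + 1), r < s ∧ π (N + r) = π (N + s) := by
      have hni : ¬ Function.Injective (fun r : Fin (Fintype.card V + 1) => π (N + r)) := by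
        intro h
        have := Fintype.card_le_of_injective _ h
        simp at this
      obtain ⟨r, s, hfrs, hne⟩ := Function.not_injective_iff.mp hni
      rcases lt_or_gt_of_ne hne with h | h
      · exact ⟨r, s, h, hfrs⟩
      · exact ⟨s, r, h, hfrs.symm⟩
    set j := N + (r : ℕ) with hjdef
    set k := N + (s : ℕ) with hkdef
    have hjk : j < k := by
      have : (r : ℕ) < (s : ℕ) := hrs
      omega
    have hπjk : π j = π k := hπrs
    set b := k - j with hbdef
    have hbpos : 0 < b := by omega
    have hjb : j + b = k := by omega
    set π' : ℕ → V := fun n => if n < j then π n else π (j + (n - j) % b) with hπ'def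
    have hag : ∀ n ≤ j, π' n = π n := by
      intro n hn
      show (if n < j then π n else π (j + (n - j) % b)) = π n
      rcases lt_or_eq_of_le hn with h | h
      · rw [if_pos h]
      · rw [if_neg (by omega), h]
        simp
    have hπ'ge : ∀ n, j ≤ n → π' n = π (j + (n - j) % b) := by
      intro n hn
      show (if n < j then π n else π (j + (n - j) % b)) = _
      rw [if_neg (by omega)]
    have hplay' : IsPlay E π' := by
      intro n
      rcases le_or_gt (n + 1) j with h | h
      · rw [hag n (by omega), hag (n + 1) h]
        exact hplay n
      · have hjn : j ≤ n := by omega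
        set q := (n - j) % b with hqdef
        have hqb : q < b := Nat.mod_lt _ hbpos
        have e1 : π' n = π (j + q) := hπ'ge n hjn
        have e2 : (n + 1 - j) % b = (q + 1) % b := by
          rw [show n + 1 - j = (n - j) + 1 by omega]
          conv_lhs => rw [Nat.add_mod]
          conv_rhs => rw [Nat.add_mod, Nat.mod_mod_of_dvd _ dvd_rfl]
        by_cases hq1 : q + 1 < b
        · have e3 : π' (n + 1) = π (j + q + 1) := by
            rw [hπ'ge (n + 1) (by omega), e2, Nat.mod_eq_of_lt hq1, ← Nat.add_assoc]
          rw [e1, e3]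
          exact hplay (j + q)
        · have hq2 : q + 1 = b := by omega
          have e3 : π' (n + 1) = π j := by
            rw [hπ'ge (n + 1) (by omega), e2, hq2, Nat.mod_self]
            simp
          rw [e1, e3, hπjk, ← hjb, show j + b = j + q + 1 by omega]
          exact hplay (j + q)
    have hstart' : π' 0 = v0 := by rw [hag 0 (Nat.zero_le j)]; exact hstart
    have hlasso : IsLasso π' j b := by
      refine ⟨hbpos, fun n hn => ?_⟩
      rw [hπ'ge n hn, hπ'ge (n + b) (by omega),
        show n + b - j = (n - j) + b by omega, Nat.add_mod_right]
    refine ⟨π', j, b, hplay', hstart', hlasso, ?_, ?_⟩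
    · have hs : (s : ℕ) ≤ Fintype.card V := by omega
      have h1 : j + b ≤ N + Fintype.card V := by omega
      have h2 : (t + 2) * Fintype.card V = t * Fintype.card V + 2 * Fintype.card V := by
        ring
      omega
    · intro i
      obtain ⟨hmem, hwt⟩ := hgm i
      have hmi : m i ≤ j := le_trans (hmN i) (Nat.le_add_right N r)
      have hmem' : π' (m i) ∈ T i := by rw [hag (m i) hmi]; exact hmem
      refine lt_of_le_of_lt (cost_le_of_mem (w i) (T i) π' hmem') ?_
      rw [← pathWeight_congr' (w i) (fun x hx => (hag x (le_trans hx hmi)).symm)]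
      exact hwt
  · rintro ⟨π, a, b, hplay, h0, _, _, hc⟩
    exact ⟨π, hplay, h0, hc⟩
end

section
/- In the Pareto setting with initial vertex v_0, let π be a play from v_0 and let p = pay(π). Then there exists a strategy σ_0 of player 0 such that π is consistent with σ_0 and π is σ_0-fixed Pareto-optimal, if and only if for every deviation hv of π with last(h) owned by the environment (last(h) ∈ V∖V_0), player 0 wins from v for the objective {ρ ∈ Plays(v) : ¬(pay(h·ρ) < p)}. -/
/-!
Given `σ0` making `π` Pareto-optimal, after an environment deviation `h v` player 0 wins from `v`
by playing `σ0` shifted by `h`: a consistent play `ρ` with `pay (h·ρ) < pay π` would make `h·ρ` a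
`σ0`-consistent play from `v0` beating `π`. Conversely, player 0 follows `π` and, at the first
deviation `h v` (necessarily by the environment, since player 0 never leaves `π`), switches to a
winning strategy from `v`; then every consistent play other than `π` has the form `h·ρ` with `ρ`
winning, so it does not beat `π`. Raw strategies built this way may prescribe moves along
non-edges on irrelevant histories; `legalize` repairs them without changing the relevant moves.
-/

open scoped Classical

/-- The history `π 0, …, π k` as a list. -/
def histList {V : Type*} (π : ℕ → V) (k : ℕ) : List V :=
  (List.range (k + 1)).map π

/-- `σ` is a strategy for the player owning the set of vertices `Vi`. -/
def IsStrategy {V : Type*} (E : V → V → Prop) (Vi : Set V) (σ : List V → V) : Prop :=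
  ∀ (l : List V) (u : V), List.Chain' E (l ++ [u]) → u ∈ Vi → E u (σ (l ++ [u]))

/-- A play is consistent with the strategy `σ` of the player owning `Vi`. -/
def PlayConsistent {V : Type*} (Vi : Set V) (σ : List V → V) (π : ℕ → V) : Prop :=
  ∀ k, π k ∈ Vi → π (k + 1) = σ (histList π k)

/-- The play `h · ρ` obtained by concatenating the history `h` with the play `ρ`. -/
def concatPlay {V : Type*} (h : List V) (ρ : ℕ → V) : ℕ → V := fun k =>
  if hk : k < h.length then h.get ⟨k, hk⟩ else ρ (k - h.length)

/-- The payoff of a play: the tuple of the `t` environment costs, with the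
componentwise partial order. -/
noncomputable def pay {V : Type*} {t : ℕ} (w : Fin t → V → V → ℕ) (T : Fin t → Set V)
    (π : ℕ → V) : Fin t → ℕ∞ :=
  fun i => cost (w i) (T i) π

/-- Player 0 (owning `V0`) wins from `v` for the objective `Ω`. -/
def Player0Wins {V : Type*} (E : V → V → Prop) (V0 : Set V) (v : V)
    (Ω : (ℕ → V) → Prop) : Prop :=
  ∃ σ : List V → V, IsStrategy E V0 σ ∧
    ∀ ρ, IsPlay E ρ → ρ 0 = v → PlayConsistent V0 σ ρ → Ω ρ

/-- `π` is `σ0`-fixed Pareto-optimal: no play from `v0` consistent with `σ0` has a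
strictly smaller payoff. -/
def ParetoOptimal {V : Type*} {t : ℕ} (E : V → V → Prop) (V0 : Set V) (v0 : V)
    (w : Fin t → V → V → ℕ) (T : Fin t → Set V) (σ0 : List V → V) (π : ℕ → V) : Prop :=
  ¬ ∃ π', IsPlay E π' ∧ π' 0 = v0 ∧ PlayConsistent V0 σ0 π' ∧ pay w T π' < pay w T π

section Histories

variable {V : Type*} {E : V → V → Prop}

@[simp]
lemma length_histList (π : ℕ → V) (k : ℕ) : (histList π k).length = k + 1 := by
  simp [histList]

@[simp]
lemma getElem_histList (π : ℕ → V) {k j : ℕ} (h : j < (histList π k).length) :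
    (histList π k)[j] = π j := by
  simp [histList]

lemma getElem?_histList (π : ℕ → V) (k j : ℕ) :
    (histList π k)[j]? = if j ≤ k then some (π j) else none := by
  split_ifs with h <;> simp [histList, h]

lemma histList_eq_append (π : ℕ → V) (k : ℕ) :
    histList π k = (List.range k).map π ++ [π k] := by
  simp [histList, List.range_succ]

@[simp]
lemma getLast?_histList (π : ℕ → V) (k : ℕ) : (histList π k).getLast? = some (π k) := by
  simp [histList_eq_append]

lemma histList_congr {π π' : ℕ → V} {k : ℕ} (h : ∀ j ≤ k, π j = π' j) :
    histList π k = histList π' k :=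
  List.map_congr_left fun j hj => h j (Nat.lt_succ_iff.mp (List.mem_range.mp hj))

lemma IsPlay.isChain_histList {π : ℕ → V} (hπ : IsPlay E π) (k : ℕ) :
    List.IsChain E (histList π k) := by
  rw [List.isChain_iff_getElem]
  intro i h
  simpa using hπ i

lemma IsPlay.shift {π : ℕ → V} (hπ : IsPlay E π) (n : ℕ) : IsPlay E (fun j => π (j + n)) :=
  fun k => by simpa [Nat.add_right_comm] using hπ (k + n)

lemma histList_drop (π : ℕ → V) (k n : ℕ) :
    (histList π (k + n)).drop n = histList (fun j => π (j + n)) k := by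
  apply List.ext_getElem (by simp; omega)
  intro i _ _
  simp [Nat.add_comm]

lemma IsStrategy.edge_histList {Vi : Set V} {σ : List V → V} (hσ : IsStrategy E Vi σ)
    {π : ℕ → V} (hπ : IsPlay E π) {k : ℕ} (hk : π k ∈ Vi) : E (π k) (σ (histList π k)) := by
  have h := hσ _ _ (histList_eq_append π k ▸ hπ.isChain_histList k) hk
  rwa [← histList_eq_append] at h

lemma concatPlay_histList_of_le (π ρ : ℕ → V) {k m : ℕ} (h : k ≤ m) :
    concatPlay (histList π m) ρ k = π k := by
  simp [concatPlay, Nat.lt_succ_of_le h]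

lemma concatPlay_histList_add (π ρ : ℕ → V) (m j : ℕ) :
    concatPlay (histList π m) ρ (j + (m + 1)) = ρ j := by
  simp [concatPlay, show ¬ j + (m + 1) < m + 1 by omega]

lemma histList_concatPlay (π ρ : ℕ → V) (m j : ℕ) :
    histList (concatPlay (histList π m) ρ) (j + (m + 1)) = histList π m ++ histList ρ j := by
  apply List.ext_getElem (by simp; omega)
  intro n _ _
  rcases lt_or_ge n (m + 1) with hn | hn
  · simp [List.getElem_append_left (by simpa using hn : n < (histList π m).length),
      concatPlay_histList_of_le π ρ (Nat.lt_succ_iff.mp hn)]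
  · obtain ⟨i, rfl⟩ := Nat.exists_eq_add_of_le' hn
    simp [List.getElem_append_right (by simp : (histList π m).length ≤ i + (m + 1)),
      concatPlay_histList_add]

lemma concatPlay_histList_shift {π π' : ℕ → V} {m : ℕ} (h : ∀ j ≤ m, π' j = π j) :
    concatPlay (histList π m) (fun j => π' (j + (m + 1))) = π' := by
  funext k
  rcases le_or_gt k m with hk | hk
  · rw [concatPlay_histList_of_le _ _ hk, h k hk]
  · obtain ⟨j, rfl⟩ : ∃ j, k = j + (m + 1) := ⟨k - (m + 1), by omega⟩
    rw [concatPlay_histList_add]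

lemma IsPlay.concatPlay_histList {π ρ : ℕ → V} (hπ : IsPlay E π) (hρ : IsPlay E ρ) {m : ℕ}
    (he : E (π m) (ρ 0)) : IsPlay E (concatPlay (histList π m) ρ) := by
  intro k
  rcases lt_trichotomy k m with hk | rfl | hk
  · rw [concatPlay_histList_of_le _ _ hk.le, concatPlay_histList_of_le _ _ hk]
    exact hπ k
  · rwa [concatPlay_histList_of_le _ _ le_rfl, ← Nat.zero_add (k + 1), concatPlay_histList_add]
  · obtain ⟨j, rfl⟩ : ∃ j, k = j + (m + 1) := ⟨k - (m + 1), by omega⟩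
    rw [concatPlay_histList_add, Nat.add_right_comm, concatPlay_histList_add]
    exact hρ j

lemma exists_first_deviation {π π' : ℕ → V} (hne : π' ≠ π) (h0 : π' 0 = π 0) :
    ∃ m, (∀ j ≤ m, π' j = π j) ∧ π' (m + 1) ≠ π (m + 1) := by
  have hex : ∃ j, π' j ≠ π j := Function.ne_iff.mp hne
  obtain ⟨m, hm⟩ : ∃ m, Nat.find hex = m + 1 :=
    Nat.exists_eq_succ_of_ne_zero fun h => (h ▸ Nat.find_spec hex) h0
  refine ⟨m, fun j hj => not_not.mp (Nat.find_min hex (by omega)), hm ▸ Nat.find_spec hex⟩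

end Histories

section Strategies

variable {V : Type*} {E : V → V → Prop}

-- The default of `getLastD` is irrelevant: `IsStrategy` never inspects the empty history.
noncomputable def legalize (hE : ∀ u, ∃ v, E u v) (σ : List V → V) (l : List V) : V :=
  if E (l.getLastD (σ l)) (σ l) then σ l else (hE (l.getLastD (σ l))).choose

lemma isStrategy_legalize (hE : ∀ u, ∃ v, E u v) (Vi : Set V) (σ : List V → V) :
    IsStrategy E Vi (legalize hE σ) := by
  intro l u _ _
  unfold legalize
  split_ifs with h
  · simpa using h
  · simpa using (hE _).choose_spec

lemma legalize_histList (hE : ∀ u, ∃ v, E u v) {σ : List V → V} {π : ℕ → V} {k : ℕ}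
    (h : E (π k) (σ (histList π k))) : legalize hE σ (histList π k) = σ (histList π k) := by
  rw [legalize, if_pos (by simpa using h)]

-- Equals `l.length` exactly when `l` is a prefix of `π`.
noncomputable def firstDeviation (π : ℕ → V) (l : List V) : ℕ :=
  Nat.find (⟨l.length, by simp⟩ : ∃ j, l[j]? ≠ some (π j))

lemma firstDeviation_histList_self (π : ℕ → V) (k : ℕ) :
    firstDeviation π (histList π k) = k + 1 := by
  rw [firstDeviation, Nat.find_eq_iff]
  refine ⟨by simp, fun j hj => ?_⟩
  simp [Nat.lt_succ_iff.mp hj]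

lemma firstDeviation_histList {π π' : ℕ → V} {m : ℕ} (hag : ∀ j ≤ m, π' j = π j)
    (hne : π' (m + 1) ≠ π (m + 1)) (k : ℕ) :
    firstDeviation π (histList π' (k + (m + 1))) = m + 1 := by
  rw [firstDeviation, Nat.find_eq_iff]
  refine ⟨by simpa [getElem?_histList] using hne, fun j hj => ?_⟩
  simp [show j ≤ k + (m + 1) by omega, hag j (by omega)]

/-- Follow `π`; once the history first leaves `π` by a move from `π m` to `v`, play `τ m v` on
the part of the history starting at `v`. -/
noncomputable def followOrSwitch (π : ℕ → V) (τ : ℕ → V → List V → V) (l : List V) : V :=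
  if firstDeviation π l = l.length then π l.length
  else τ (firstDeviation π l - 1) (l.getD (firstDeviation π l) (π 0)) (l.drop (firstDeviation π l))

lemma followOrSwitch_histList_self (π : ℕ → V) (τ : ℕ → V → List V → V) (k : ℕ) :
    followOrSwitch π τ (histList π k) = π (k + 1) := by
  simp [followOrSwitch, firstDeviation_histList_self]

lemma followOrSwitch_histList {π π' : ℕ → V} (τ : ℕ → V → List V → V) {m : ℕ}
    (hag : ∀ j ≤ m, π' j = π j) (hne : π' (m + 1) ≠ π (m + 1)) (k : ℕ) :
    followOrSwitch π τ (histList π' (k + (m + 1))) =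
      τ m (π' (m + 1)) (histList (fun j => π' (j + (m + 1))) k) := by
  rw [followOrSwitch, firstDeviation_histList hag hne, if_neg (by simp; omega), histList_drop,
    List.getD_eq_getElem?_getD, getElem?_histList, if_pos (by omega)]
  rfl

end Strategies

section Consistency

variable {V : Type*} {E : V → V → Prop} {V0 : Set V}

lemma PlayConsistent.concatPlay_histList (hE : ∀ u, ∃ v, E u v) {σ : List V → V}
    (hσ : IsStrategy E V0 σ) {π ρ : ℕ → V} (hπ : IsPlay E π) (hcons : PlayConsistent V0 σ π)
    {m : ℕ} (hm : π m ∉ V0) (hρ : IsPlay E ρ) (he : E (π m) (ρ 0))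
    (hρcons : PlayConsistent V0 (legalize hE fun l => σ (histList π m ++ l)) ρ) :
    PlayConsistent V0 σ (concatPlay (histList π m) ρ) := by
  intro k hk
  rcases lt_trichotomy k m with hkm | rfl | hkm
  · rw [concatPlay_histList_of_le _ _ hkm.le] at hk
    rw [concatPlay_histList_of_le _ _ hkm, hcons k hk,
      histList_congr fun j hj => (concatPlay_histList_of_le π ρ (hj.trans hkm.le)).symm]
  · exact absurd (concatPlay_histList_of_le π ρ le_rfl ▸ hk) hm
  · obtain ⟨j, rfl⟩ : ∃ j, k = j + (m + 1) := ⟨k - (m + 1), by omega⟩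
    rw [concatPlay_histList_add] at hk
    have hedge := hσ.edge_histList (hπ.concatPlay_histList hρ he) (k := j + (m + 1))
      (by rwa [concatPlay_histList_add])
    rw [concatPlay_histList_add, histList_concatPlay] at hedge
    rw [Nat.add_right_comm, concatPlay_histList_add, hρcons j hk, legalize_histList hE hedge,
      histList_concatPlay]

lemma legalize_followOrSwitch_histList_self (hE : ∀ u, ∃ v, E u v) {π : ℕ → V}
    (hπ : IsPlay E π) (τ : ℕ → V → List V → V) (k : ℕ) :
    legalize hE (followOrSwitch π τ) (histList π k) = π (k + 1) := by
  rw [legalize_histList hE (by rw [followOrSwitch_histList_self]; exact hπ k),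
    followOrSwitch_histList_self]

lemma PlayConsistent.shift_of_followOrSwitch (hE : ∀ u, ∃ v, E u v) {π π' : ℕ → V}
    {τ : ℕ → V → List V → V} {m : ℕ} (hτ : IsStrategy E V0 (τ m (π' (m + 1))))
    (hp : IsPlay E π') (hag : ∀ j ≤ m, π' j = π j) (hne : π' (m + 1) ≠ π (m + 1))
    (hc : PlayConsistent V0 (legalize hE (followOrSwitch π τ)) π') :
    PlayConsistent V0 (τ m (π' (m + 1))) (fun j => π' (j + (m + 1))) := by
  intro k hk
  have hedge := hτ.edge_histList (hp.shift (m + 1)) hk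
  rw [← followOrSwitch_histList τ hag hne] at hedge
  show π' (k + 1 + (m + 1)) = _
  rw [Nat.add_right_comm, hc _ hk, legalize_histList hE hedge, followOrSwitch_histList τ hag hne]

end Consistency

theorem pareto_check_characterization_general {V : Type*} (E : V → V → Prop)
    (hE : ∀ u, ∃ v, E u v) (V0 : Set V) (v0 : V) (t : ℕ)
    (w : Fin t → V → V → ℕ) (T : Fin t → Set V)
    (π : ℕ → V) (hπ : IsPlay E π) (h0 : π 0 = v0) :
    (∃ σ0 : List V → V, IsStrategy E V0 σ0 ∧ PlayConsistent V0 σ0 π ∧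
        ParetoOptimal E V0 v0 w T σ0 π) ↔
      (∀ (m : ℕ) (v : V), π m ∉ V0 → E (π m) v → v ≠ π (m + 1) →
        Player0Wins E V0 v
          (fun ρ => ¬ pay w T (concatPlay (histList π m) ρ) < pay w T π)) := by
  constructor
  · rintro ⟨σ0, hσ0, hcons, hPO⟩ m v hm he -
    refine ⟨_, isStrategy_legalize hE V0 fun l => σ0 (histList π m ++ l),
      fun ρ hρ hρ0 hρcons hlt => hPO ⟨_, hπ.concatPlay_histList hρ (hρ0 ▸ he), ?_,
        hcons.concatPlay_histList hE hσ0 hπ hm hρ (hρ0 ▸ he) hρcons, hlt⟩⟩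
    rw [concatPlay_histList_of_le _ _ (Nat.zero_le m), h0]
  · intro H
    have : Nonempty V := ⟨v0⟩
    choose! τ hτ hτwin using H
    refine ⟨legalize hE (followOrSwitch π τ), isStrategy_legalize hE V0 _,
      fun k _ => (legalize_followOrSwitch_histList_self hE hπ τ k).symm, ?_⟩
    rintro ⟨π', hp, h0', hc, hlt⟩
    obtain ⟨m, hag, hne⟩ :=
      exists_first_deviation (fun h => hlt.ne (congrArg (pay w T) h)) (h0'.trans h0.symm)
    by_cases hm : π m ∈ V0
    · apply hne
      rw [hc m (hag m le_rfl ▸ hm), histList_congr hag, legalize_followOrSwitch_histList_self hE hπ]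
    · have hedge : E (π m) (π' (m + 1)) := hag m le_rfl ▸ hp m
      refine hτwin m _ hm hedge hne _ (hp.shift (m + 1)) (by simp)
        (hc.shift_of_followOrSwitch hE (hτ m _ hm hedge hne) hp hag hne) ?_
      rwa [concatPlay_histList_shift hag]

/-- A play `π` from `v0` is consistent with some strategy `σ0` of player 0 making it
`σ0`-fixed Pareto-optimal iff for every deviation `hv` of `π` with `last h` owned by
the environment, player 0 wins from `v` for the objective `¬(pay(h·ρ) < pay π)`. -/
theorem pareto_check_characterization {V : Type*} [Fintype V] (E : V → V → Prop)
    (hE : ∀ u, ∃ v, E u v) (V0 : Set V) (v0 : V) (t : ℕ)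
    (w0 : V → V → ℕ) (T0 : Set V) (w : Fin t → V → V → ℕ) (T : Fin t → Set V)
    (π : ℕ → V) (hπ : IsPlay E π) (h0 : π 0 = v0) :
    (∃ σ0 : List V → V, IsStrategy E V0 σ0 ∧ PlayConsistent V0 σ0 π ∧
        ParetoOptimal E V0 v0 w T σ0 π) ↔
      (∀ (m : ℕ) (v : V), π m ∉ V0 → E (π m) v → v ≠ π (m + 1) →
        Player0Wins E V0 v
          (fun ρ => ¬ pay w T (concatPlay (histList π m) ρ) < pay w T π)) :=
  pareto_check_characterization_general E hE V0 v0 t w T π hπ h0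
end

section
/- In the Pareto setting with vertex set V, t environment target sets, and initial vertex v_0, let c ∈ ℕ. There exist a strategy σ_0 of player 0 and a σ_0-fixed Pareto-optimal play π with cost_0(π) ≤ c if and only if there exists a lasso play π′ = μ(ν)^ω from v_0 with |μ| ≤ (t+1)·|V|, |ν| ≤ |V| and cost_0(π′) ≤ c such that, for every deviation hv of π′ with last(h) owned by the environment (last(h) ∈ V∖V_0), player 0 wins from v for the objective {ρ ∈ Plays(v) : ¬(pay(h·ρ) < pay(π′))}. -/
open scoped Classical

namespace CPS

variable {V : Type*}

/-! ### histList lemmas -/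

@[simp] lemma histList_length (π : ℕ → V) (k : ℕ) : (histList π k).length = k + 1 := by
  simp [histList]

lemma histList_getElem (π : ℕ → V) (k j : ℕ) (h : j < (histList π k).length) :
    (histList π k)[j] = π j := by
  simp [histList]

lemma histList_getElem? (π : ℕ → V) (k j : ℕ) (h : j ≤ k) :
    (histList π k)[j]? = some (π j) := by
  rw [List.getElem?_eq_getElem (by simp; omega)]
  simp [histList_getElem]

lemma histList_ne_nil (π : ℕ → V) (k : ℕ) : histList π k ≠ [] := by
  intro h
  have := histList_length π k
  rw [h] at this; simp at this

lemma histList_getLast (π : ℕ → V) (k : ℕ) :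
    (histList π k).getLast (histList_ne_nil π k) = π k := by
  rw [List.getLast_eq_getElem]
  simp [histList_getElem]

lemma histList_getLastD (π : ℕ → V) (k : ℕ) (z : V) :
    (histList π k).getLastD z = π k := by
  rw [List.getLastD_eq_getLast? , List.getLast?_eq_getLast (histList_ne_nil π k)]
  simp [histList_getLast]

lemma histList_congr {π π' : ℕ → V} {k : ℕ} (h : ∀ j ≤ k, π j = π' j) :
    histList π k = histList π' k := by
  apply List.ext_getElem (by simp)
  intro j h1 h2
  rw [histList_getElem, histList_getElem]
  exact h j (by simp at h1; omega)

/-! ### concatPlay lemmas -/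

lemma concatPlay_eq (π ρ : ℕ → V) (m k : ℕ) :
    concatPlay (histList π m) ρ k = if k ≤ m then π k else ρ (k - (m + 1)) := by
  unfold concatPlay
  by_cases h : k ≤ m
  · rw [dif_pos (by simp; omega), if_pos h]
    simp [List.get_eq_getElem, histList_getElem]
  · rw [dif_neg (by simp; omega), if_neg h]
    simp

lemma concatPlay_eq_of_le (π ρ : ℕ → V) {m k : ℕ} (h : k ≤ m) :
    concatPlay (histList π m) ρ k = π k := by rw [concatPlay_eq, if_pos h]

lemma concatPlay_eq_of_gt (π ρ : ℕ → V) {m k : ℕ} (h : m < k) :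
    concatPlay (histList π m) ρ k = ρ (k - (m + 1)) := by
  rw [concatPlay_eq, if_neg (by omega)]

lemma concatPlay_shift (π ρ : ℕ → V) (m j : ℕ) :
    concatPlay (histList π m) ρ (m + 1 + j) = ρ j := by
  rw [concatPlay_eq_of_gt _ _ (by omega)]
  congr 1; omega

lemma isPlay_concat {E : V → V → Prop} {π ρ : ℕ → V} {m : ℕ}
    (hπ : IsPlay E π) (hρ : IsPlay E ρ) (he : E (π m) (ρ 0)) :
    IsPlay E (concatPlay (histList π m) ρ) := by
  intro k
  rcases lt_trichotomy k m with h | h | h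
  · rw [concatPlay_eq_of_le _ _ (le_of_lt h), concatPlay_eq_of_le _ _ (by omega)]
    exact hπ k
  · subst h
    rw [concatPlay_eq_of_le _ _ le_rfl, concatPlay_eq_of_gt _ _ (by omega)]
    simpa using he
  · rw [concatPlay_eq_of_gt _ _ h, concatPlay_eq_of_gt _ _ (by omega)]
    have h1 : k - (m + 1) + 1 = k + 1 - (m + 1) := by omega
    rw [← h1]
    exact hρ _

lemma histList_concat (π ρ : ℕ → V) (m j : ℕ) :
    histList (concatPlay (histList π m) ρ) (m + 1 + j) = histList π m ++ histList ρ j := by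
  apply List.ext_getElem (by simp; omega)
  intro i h1 h2
  by_cases h : i ≤ m
  · rw [histList_getElem, List.getElem_append_left (by simp; omega), histList_getElem,
      concatPlay_eq_of_le _ _ h]
  · rw [histList_getElem, List.getElem_append_right (by simp; omega), histList_getElem,
      concatPlay_eq_of_gt _ _ (by omega)]
    simp

/-! ### chains -/

lemma chain'_histList {E : V → V → Prop} {π : ℕ → V} (hπ : IsPlay E π) (m : ℕ) :
    List.Chain' E (histList π m) := by
  unfold List.Chain'
  rw [histList, List.isChain_map, List.isChain_range_succ]
  intro i _
  exact hπ i

lemma chain'_histList_append {E : V → V → Prop} {π : ℕ → V} (hπ : IsPlay E π) (m : ℕ)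
    {v : V} (hv : E (π m) v) : List.Chain' E (histList π m ++ [v]) := by
  apply List.IsChain.append (chain'_histList hπ m) (List.isChain_singleton v)
  intro x hx y hy
  rw [List.getLast?_eq_getLast (histList_ne_nil π m)] at hx
  simp [histList_getLast] at hx
  simp at hy
  subst hx; subst hy; exact hv

/-! ### pathWeight lemmas -/

lemma pathWeight_mono (w : V → V → ℕ) (π : ℕ → V) {n n' : ℕ} (h : n ≤ n') :
    pathWeight w π n ≤ pathWeight w π n' :=
  Finset.sum_le_sum_of_subset (Finset.range_subset_range.2 h)

lemma pathWeight_congr {w : V → V → ℕ} {π π' : ℕ → V} {n : ℕ}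
    (h : ∀ k ≤ n, π k = π' k) : pathWeight w π n = pathWeight w π' n := by
  apply Finset.sum_congr rfl
  intro j hj
  simp at hj
  rw [h j (by omega), h (j+1) (by omega)]

lemma pathWeight_succ (w : V → V → ℕ) (π : ℕ → V) (n : ℕ) :
    pathWeight w π (n + 1) = pathWeight w π n + w (π n) (π (n + 1)) := by
  simp [pathWeight, Finset.sum_range_succ]

lemma pathWeight_add (w : V → V → ℕ) (π : ℕ → V) (n j : ℕ) :
    pathWeight w π (n + j) = pathWeight w π n + pathWeight w (fun k => π (n + k)) j := by
  induction j with
  | zero => simp [pathWeight]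
  | succ j ih =>
    rw [show n + (j+1) = (n + j) + 1 by omega, pathWeight_succ, ih,
      pathWeight_succ w (fun k => π (n + k)) j]
    rw [show n + j + 1 = n + (j + 1) by omega, Nat.add_assoc]

/-! ### cost lemmas -/

lemma cost_eq_of_first {w : V → V → ℕ} {T : Set V} {π : ℕ → V} {j : ℕ}
    (hj : π j ∈ T) (hfirst : ∀ k < j, π k ∉ T) :
    cost w T π = (pathWeight w π j : ℕ∞) := by
  have hex : ∃ n, π n ∈ T := ⟨j, hj⟩
  rw [cost, dif_pos hex]
  congr 1
  have := Nat.find_spec hex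
  rcases lt_trichotomy (Nat.find hex) j with h | h | h
  · exact absurd this (hfirst _ h)
  · rw [h]
  · exact absurd hj (Nat.find_min hex h)

lemma cost_le_pathWeight {w : V → V → ℕ} {T : Set V} {π : ℕ → V} {n : ℕ}
    (h : π n ∈ T) : cost w T π ≤ (pathWeight w π n : ℕ∞) := by
  have hex : ∃ n, π n ∈ T := ⟨n, h⟩
  rw [cost, dif_pos hex]
  exact_mod_cast pathWeight_mono w π (Nat.find_le h)

lemma cost_eq_top {w : V → V → ℕ} {T : Set V} {π : ℕ → V}
    (h : ∀ n, π n ∉ T) : cost w T π = ⊤ := by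
  rw [cost, dif_neg]; push_neg; exact h

lemma cost_ne_top {w : V → V → ℕ} {T : Set V} {π : ℕ → V}
    (h : cost w T π ≠ ⊤) : ∃ n, π n ∈ T := by
  by_contra hc; push_neg at hc
  exact h (cost_eq_top hc)

lemma cost_congr_of_agree {w : V → V → ℕ} {T : Set V} {π π' : ℕ → V} {m : ℕ}
    (hagree : ∀ k ≤ m, π k = π' k) (hvis : ∃ j ≤ m, π j ∈ T) :
    cost w T π = cost w T π' := by
  obtain ⟨j, hjm, hj⟩ := hvis
  -- first visits coincide
  have hex : ∃ n, π n ∈ T := ⟨j, hj⟩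
  have hfind : Nat.find hex ≤ m := le_trans (Nat.find_le hj) hjm
  have h1 : π (Nat.find hex) ∈ T := Nat.find_spec hex
  have h2 : ∀ k < Nat.find hex, π k ∉ T := fun k hk => Nat.find_min hex hk
  have h1' : π' (Nat.find hex) ∈ T := by rw [← hagree _ hfind]; exact h1
  have h2' : ∀ k < Nat.find hex, π' k ∉ T := by
    intro k hk
    rw [← hagree _ (by omega)]
    exact h2 k hk
  rw [cost_eq_of_first h1 h2, cost_eq_of_first h1' h2']
  congr 1
  exact pathWeight_congr (fun k hk => hagree k (by omega))

lemma cost_split {w : V → V → ℕ} {T : Set V} {π : ℕ → V} {m : ℕ}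
    (h : ∀ k ≤ m, π k ∉ T) :
    cost w T π = (pathWeight w π (m + 1) : ℕ∞) + cost w T (fun j => π (m + 1 + j)) := by
  by_cases hex : ∃ n, π n ∈ T
  · obtain ⟨n, hn⟩ := hex
    have hnm : m + 1 ≤ n := by
      by_contra hc; exact h n (by omega) hn
    have hex2 : ∃ j, (fun j => π (m + 1 + j)) j ∈ T :=
      ⟨n - (m+1), by simp only []; rw [show m+1+(n-(m+1)) = n by omega]; exact hn⟩
    -- first visit of shift
    set jf := Nat.find hex2 with hjf
    have hf1 : π (m + 1 + jf) ∈ T := Nat.find_spec hex2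
    have hf2 : ∀ k < m + 1 + jf, π k ∉ T := by
      intro k hk
      by_cases hkm : k ≤ m
      · exact h k hkm
      · intro hmem
        have : k - (m+1) < jf := by omega
        exact Nat.find_min hex2 this (by simpa [show m+1+(k-(m+1)) = k by omega] using hmem)
    have hc2 : cost w T (fun j => π (m + 1 + j)) = (pathWeight w (fun j => π (m+1+j)) jf : ℕ∞) := by
      apply cost_eq_of_first (j := jf)
      · exact hf1
      · intro k hk
        exact hf2 (m + 1 + k) (by omega)
    rw [cost_eq_of_first hf1 hf2, hc2, pathWeight_add]
    push_cast
    ring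
  · rw [cost_eq_top (by push_neg at hex; exact hex), cost_eq_top (by
      push_neg at hex; intro n; exact hex _)]
    simp



/-! ### strategies -/

noncomputable def defStrat {E : V → V → Prop} (hE : ∀ u, ∃ v, E u v) (z : V) :
    List V → V := fun l => (hE (l.getLastD z)).choose

lemma isStrategy_defStrat {E : V → V → Prop} (hE : ∀ u, ∃ v, E u v) (V0 : Set V) (z : V) :
    IsStrategy E V0 (defStrat hE z) := by
  intro l u hc hu
  show E u (hE ((l ++ [u]).getLastD z)).choose
  rw [List.getLastD_concat]
  exact (hE u).choose_spec

/-! ### deviation index -/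

lemma devIdx_ex (π' : ℕ → V) (l : List V) : ∃ j, l[j]? ≠ some (π' j) :=
  ⟨l.length, by simp⟩

noncomputable def devIdx (π' : ℕ → V) (l : List V) : ℕ := Nat.find (devIdx_ex π' l)

lemma devIdx_le (π' : ℕ → V) (l : List V) : devIdx π' l ≤ l.length :=
  Nat.find_le (by simp)

lemma devIdx_agree (π' : ℕ → V) (l : List V) {j : ℕ} (h : j < devIdx π' l) :
    l[j]? = some (π' j) := by
  have := Nat.find_min (devIdx_ex π' l) h
  simpa using this

lemma devIdx_spec (π' : ℕ → V) (l : List V) :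
    l[devIdx π' l]? ≠ some (π' (devIdx π' l)) := Nat.find_spec (devIdx_ex π' l)

lemma devIdx_histList (π' π'' : ℕ → V) (k : ℕ) (h : ∀ j ≤ k, π'' j = π' j) :
    devIdx π' (histList π'' k) = k + 1 := by
  rw [devIdx, Nat.find_eq_iff]
  constructor
  · rw [List.getElem?_eq_none (by simp)]
    simp
  · intro j hj
    rw [histList_getElem? _ _ _ (by omega), h j (by omega)]
    simp

lemma devIdx_histList_dev (π' π'' : ℕ → V) (k d : ℕ) (hdk : d ≤ k)
    (h : ∀ j < d, π'' j = π' j) (hd : π'' d ≠ π' d) :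
    devIdx π' (histList π'' k) = d := by
  rw [devIdx, Nat.find_eq_iff]
  constructor
  · rw [histList_getElem? _ _ _ hdk]
    simp [hd]
  · intro j hj
    rw [histList_getElem? _ _ _ (by omega), h j hj]
    simp

section Backward

variable {t : ℕ} {E : V → V → Prop} (hE : ∀ u, ∃ v, E u v) (V0 : Set V) (v0 : V)
  (w : Fin t → V → V → ℕ) (T : Fin t → Set V) (π' : ℕ → V)

variable (hdev : ∀ (m : ℕ) (v : V), π' m ∉ V0 → E (π' m) v → v ≠ π' (m + 1) →
      Player0Wins E V0 v (fun ρ => ¬ pay w T (concatPlay (histList π' m) ρ) < pay w T π'))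

noncomputable def winStrat (m : ℕ) (v : V) : List V → V :=
  if h : π' m ∉ V0 ∧ E (π' m) v ∧ v ≠ π' (m + 1) then (hdev m v h.1 h.2.1 h.2.2).choose
  else defStrat hE v

lemma winStrat_isStrategy (m : ℕ) (v : V) :
    IsStrategy E V0 (winStrat hE V0 w T π' hdev m v) := by
  rw [winStrat]
  split
  · next h => exact (hdev m v h.1 h.2.1 h.2.2).choose_spec.1
  · exact isStrategy_defStrat hE V0 v

lemma winStrat_spec {m : ℕ} {v : V} (h1 : π' m ∉ V0) (h2 : E (π' m) v)
    (h3 : v ≠ π' (m + 1)) :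
    ∀ ρ, IsPlay E ρ → ρ 0 = v → PlayConsistent V0 (winStrat hE V0 w T π' hdev m v) ρ →
      ¬ pay w T (concatPlay (histList π' m) ρ) < pay w T π' := by
  have : winStrat hE V0 w T π' hdev m v = (hdev m v h1 h2 h3).choose := by
    rw [winStrat, dif_pos ⟨h1, h2, h3⟩]
  rw [this]
  exact (hdev m v h1 h2 h3).choose_spec.2

noncomputable def backStrat : List V → V := fun l =>
  if devIdx π' l = l.length then π' l.length
  else if 0 < devIdx π' l then
    winStrat hE V0 w T π' hdev (devIdx π' l - 1) (l.getD (devIdx π' l) v0)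
      (l.drop (devIdx π' l))
  else defStrat hE v0 l

lemma backStrat_isStrategy (hplay : IsPlay E π') :
    IsStrategy E V0 (backStrat hE V0 v0 w T π' hdev) := by
  intro l u hc hu
  rw [backStrat]
  set L := l ++ [u] with hL
  by_cases h1 : devIdx π' L = L.length
  · rw [if_pos h1]
    have hagree : L[l.length]? = some (π' l.length) :=
      devIdx_agree π' L (by rw [h1]; simp [hL])
    rw [List.getElem?_concat_length] at hagree
    have hu' : u = π' l.length := by injection hagree
    have : L.length = l.length + 1 := by simp [hL]
    rw [this, hu']
    exact hplay l.length
  · rw [if_neg h1]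
    have hlt : devIdx π' L < L.length := lt_of_le_of_ne (devIdx_le π' L) h1
    by_cases h2 : 0 < devIdx π' L
    · rw [if_pos h2]
      set d := devIdx π' L with hd
      have hdl : d ≤ l.length := by
        have : L.length = l.length + 1 := by simp [hL]
        omega
      have hdrop : L.drop d = l.drop d ++ [u] := by
        rw [hL, List.drop_append_of_le_length hdl]
      rw [hdrop]
      apply winStrat_isStrategy
      · -- chain of suffix
        have : (l.drop d ++ [u]) <:+ L := by
          refine ⟨l.take d, ?_⟩
          rw [hL, ← List.append_assoc, List.take_append_drop]
        exact hc.suffix (by rw [hL] at this ⊢; exact this)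
      · exact hu
    · rw [if_neg h2]
      exact isStrategy_defStrat hE V0 v0 l u hc hu

lemma backStrat_consistent : PlayConsistent V0 (backStrat hE V0 v0 w T π' hdev) π' := by
  intro k _
  rw [backStrat, devIdx_histList π' π' k (fun _ _ => rfl)]
  rw [if_pos (by simp), histList_length]

lemma backStrat_pareto (hplay : IsPlay E π') (h0 : π' 0 = v0) :
    ParetoOptimal E V0 v0 w T (backStrat hE V0 v0 w T π' hdev) π' := by
  rintro ⟨π'', hplay'', h0'', hcons'', hlt⟩
  have hne : ∃ j, π'' j ≠ π' j := by
    by_contra hc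
    push_neg at hc
    have : π'' = π' := funext hc
    rw [this] at hlt
    exact lt_irrefl _ hlt
  set d := Nat.find hne with hdd
  have hdspec : π'' d ≠ π' d := Nat.find_spec hne
  have hdagree : ∀ j < d, π'' j = π' j := fun j hj => by
    have := Nat.find_min hne hj
    simpa using this
  have hd0 : 0 < d := by
    rcases Nat.eq_zero_or_pos d with h | h
    · exfalso; apply hdspec; rw [h, h0'', h0]
    · exact h
  set m := d - 1 with hm
  have hmd : m + 1 = d := by omega
  have hmm : π'' m = π' m := hdagree m (by omega)
  by_cases hV : π' m ∈ V0
  · -- impossible: strategy follows π'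
    have := hcons'' m (by rw [hmm]; exact hV)
    rw [backStrat, devIdx_histList π' π'' m (fun j hj => hdagree j (by omega)),
      if_pos (by simp), histList_length, hmd] at this
    exact hdspec this
  · set v := π'' d with hv
    have hE2 : E (π' m) v := by rw [← hmm, hv, ← hmd]; exact hplay'' m
    have hne2 : v ≠ π' (m + 1) := by rw [hmd]; exact hdspec
    set ρ : ℕ → V := fun j => π'' (d + j) with hρ
    have hρplay : IsPlay E ρ := by
      intro j
      show E (π'' (d + j)) (π'' (d + (j+1)))
      rw [show d + (j+1) = (d + j) + 1 by omega]
      exact hplay'' _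
    have hρ0 : ρ 0 = v := by simp [hρ, hv]
    have hρcons : PlayConsistent V0 (winStrat hE V0 w T π' hdev m v) ρ := by
      intro j hj
      have hcons := hcons'' (d + j) hj
      have hdev2 : devIdx π' (histList π'' (d + j)) = d :=
        devIdx_histList_dev π' π'' (d+j) d (by omega) hdagree hdspec
      rw [backStrat, hdev2] at hcons
      rw [if_neg (by simp; omega), if_pos hd0] at hcons
      have hgetD : (histList π'' (d+j)).getD d v0 = v := by
        rw [List.getD_eq_getElem?_getD, histList_getElem? _ _ _ (by omega)]
        simp [hv]
      have hdrop : (histList π'' (d+j)).drop d = histList ρ j := by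
        apply List.ext_getElem?
        intro k
        rw [List.getElem?_drop]
        by_cases hk : k ≤ j
        · rw [histList_getElem? _ _ _ (by omega), histList_getElem? _ _ _ hk]
        · rw [List.getElem?_eq_none (by simp; omega), List.getElem?_eq_none (by simp; omega)]
      rw [hgetD, hdrop] at hcons
      show ρ (j + 1) = _
      rw [hρ]
      show π'' (d + (j+1)) = _
      rw [show d + (j+1) = d + j + 1 by omega, hcons]
    have hwin := winStrat_spec hE V0 w T π' hdev hV hE2 hne2 ρ hρplay hρ0 hρcons
    apply hwin
    have hconcat : concatPlay (histList π' m) ρ = π'' := by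
      funext k
      rw [concatPlay_eq]
      by_cases hk : k ≤ m
      · rw [if_pos hk, ← hdagree k (by omega)]
      · rw [if_neg hk, hρ]
        show π'' (d + (k - (m+1))) = π'' k
        congr 1
        omega
    rw [hconcat]
    exact hlt

end Backward


/-! ### pseudo paths -/

def Pseudo (π : ℕ → V) : ℕ → List ℕ → Prop
  | _, [] => True
  | p, x :: xs => p < x ∧ π (x - 1) = π p ∧ Pseudo π x xs

@[simp] lemma pseudo_nil (π : ℕ → V) (p : ℕ) : Pseudo π p [] := trivial

lemma pseudo_cons {π : ℕ → V} {p x : ℕ} {xs : List ℕ} :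
    Pseudo π p (x :: xs) ↔ p < x ∧ π (x - 1) = π p ∧ Pseudo π x xs := Iff.rfl

lemma getLastD_mem {x : ℕ} : ∀ (l : List ℕ), l ≠ [] → l.getLastD x ∈ l := by
  intro l hl
  rw [List.getLastD_eq_getLast? , List.getLast?_eq_getLast hl]
  exact List.getLast_mem hl

lemma getLastD_indep {l : List ℕ} (h : l ≠ []) (a b : ℕ) : l.getLastD a = l.getLastD b := by
  rw [List.getLastD_eq_getLast? , List.getLastD_eq_getLast?, List.getLast?_eq_getLast h]
  simp

lemma pseudo_append {π : ℕ → V} : ∀ {l1 l2 : List ℕ} {p : ℕ},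
    Pseudo π p (l1 ++ l2) ↔ Pseudo π p l1 ∧ Pseudo π (l1.getLastD p) l2 := by
  intro l1
  induction l1 with
  | nil => simp
  | cons x xs ih =>
    intro l2 p
    simp only [List.cons_append, pseudo_cons, ih, List.getLastD_cons]
    tauto

/-! ### cardinality lemma -/

lemma nodup_length_le [Fintype V] (l : List V) (hn : l.Nodup) (F : Finset V)
    (hF : ∀ x ∈ l, x ∉ F) : l.length + F.card ≤ Fintype.card V := by
  have h1 : l.toFinset.card = l.length := List.toFinset_card_of_nodup hn
  have h2 : Disjoint l.toFinset F := by
    rw [Finset.disjoint_left]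
    intro x hx
    exact hF x (List.mem_toFinset.mp hx)
  calc l.length + F.card = (l.toFinset ∪ F).card := by
        rw [Finset.card_union_of_disjoint h2, h1]
    _ ≤ Fintype.card V := by
        apply le_trans (Finset.card_le_card (Finset.subset_univ _))
        simp

/-! ### one greedy stage -/

lemma stage_exists [Fintype V] (π : ℕ → V) :
    ∀ (fuel p e : ℕ), e - p ≤ fuel → p ≤ e →
    ∃ l : List ℕ, Pseudo π p l ∧ (∀ x ∈ l, p < x ∧ x ≤ e) ∧
      π (l.getLastD p) = π e ∧ l.getLastD p ≤ e ∧
      ((p :: l).map π).Nodup := by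
  intro fuel
  induction fuel with
  | zero =>
    intro p e hf hpe
    have : p = e := by omega
    subst this
    exact ⟨[], trivial, by simp, rfl, le_rfl, by simp⟩
  | succ fuel ih =>
    intro p e hf hpe
    set r := Nat.findGreatest (fun q => π q = π p) e with hr
    have hrp : p ≤ r := Nat.le_findGreatest hpe rfl
    have hre : r ≤ e := Nat.findGreatest_le e
    have hrspec : π r = π p := Nat.findGreatest_spec (P := fun q => π q = π p) hpe rfl
    by_cases hcase : r = e
    · refine ⟨[], trivial, by simp, ?_, hpe, by simp⟩
      simp only [List.getLastD_nil]
      rw [← hcase]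
      exact hrspec.symm
    · have hrlt : r < e := by omega
      obtain ⟨l', hP, hbd, hlast, hle, hnd⟩ := ih (r + 1) e (by omega) (by omega)
      refine ⟨(r + 1) :: l', ?_, ?_, ?_, ?_, ?_⟩
      · exact ⟨by omega, by simpa using hrspec, hP⟩
      · intro x hx
        rcases List.mem_cons.mp hx with h | h
        · omega
        · have := hbd x h; omega
      · rw [List.getLastD_cons]; exact hlast
      · rw [List.getLastD_cons]; exact hle
      · rw [List.map_cons, List.nodup_cons]
        constructor
        · intro hmem
          simp only [List.mem_map, List.mem_cons] at hmem
          obtain ⟨x, hx, hxeq⟩ := hmem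
          have hxr : r < x ∧ x ≤ e := by
            rcases hx with h | h
            · omega
            · have := hbd x h; omega
          exact Nat.findGreatest_is_greatest (by omega : r < x) hxr.2 hxeq
        · exact hnd

/-! ### chains of ≤ helpers -/

lemma chain_le_of_le {a b : ℕ} {L : List ℕ} (h : List.Chain (· ≤ ·) b L) (hab : a ≤ b) :
    List.Chain (· ≤ ·) a L := by
  cases L with
  | nil => exact List.Chain.nil
  | cons x xs =>
    rcases (List.chain_cons.mp h) with ⟨h1, h2⟩
    exact List.chain_cons.mpr ⟨le_trans hab h1, h2⟩

lemma getLastD_append : ∀ (l1 l2 : List ℕ) (p : ℕ),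
    (l1 ++ l2).getLastD p = l2.getLastD (l1.getLastD p) := by
  intro l1
  induction l1 with
  | nil => intro l2 p; simp
  | cons a l ih =>
    intro l2 p
    rw [List.cons_append, List.getLastD_cons, List.getLastD_cons, ih]

/-! ### full milestone traversal -/

lemma mu_exists [Fintype V] (π : ℕ → V) (F : Finset V) (Mtop : ℕ)
    (hF : ∀ q ≤ Mtop, π q ∉ F) :
    ∀ (L : List ℕ) (p : ℕ), List.Chain (· ≤ ·) p L → (∀ x ∈ L, x ≤ Mtop) → p ≤ Mtop →
    ∃ l : List ℕ, Pseudo π p l ∧ (∀ x ∈ l, p < x ∧ x ≤ Mtop) ∧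
      (∀ e ∈ L, ∃ x ∈ (p :: l), π x = π e ∧ x ≤ e) ∧
      π (l.getLastD p) = π (L.getLastD p) ∧ l.getLastD p ≤ L.getLastD p ∧
      l.length + L.length * (F.card + 1) ≤ L.length * Fintype.card V := by
  intro L
  induction L with
  | nil =>
    intro p _ _ _
    exact ⟨[], trivial, by simp, by simp, rfl, le_rfl, by simp⟩
  | cons e es ih =>
    intro p hchain hbd hpM
    have hpe : p ≤ e := (List.chain_cons.mp hchain).1
    have heM : e ≤ Mtop := hbd e (by simp)
    obtain ⟨l1, hP1, hbd1, hlast1, hle1, hnd1⟩ := stage_exists π (e - p) p e le_rfl hpe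
    set p1 := l1.getLastD p with hp1
    have hchain2 : List.Chain (· ≤ ·) p1 es :=
      chain_le_of_le (List.chain_cons.mp hchain).2 hle1
    obtain ⟨l2, hP2, hbd2, hhits2, hlast2, hle2, hlen2⟩ :=
      ih p1 hchain2 (fun x hx => hbd x (by simp [hx])) (le_trans hle1 heM)
    have hp1mem : p1 ∈ p :: l1 := by
      by_cases h : l1 = []
      · simp [hp1, h]
      · exact List.mem_cons_of_mem _ (getLastD_mem l1 h)
    have hpp1 : p ≤ p1 := by
      rcases List.mem_cons.mp hp1mem with h | h
      · omega
      · exact le_of_lt (hbd1 p1 h).1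
    refine ⟨l1 ++ l2, ?_, ?_, ?_, ?_, ?_, ?_⟩
    · rw [pseudo_append]; exact ⟨hP1, hP2⟩
    · intro x hx
      rcases List.mem_append.mp hx with h | h
      · exact ⟨(hbd1 x h).1, le_trans (hbd1 x h).2 heM⟩
      · exact ⟨lt_of_le_of_lt hpp1 (hbd2 x h).1, (hbd2 x h).2⟩
    · intro e' he'
      have hp1mem' : p1 ∈ p :: (l1 ++ l2) := by
        rcases List.mem_cons.mp hp1mem with h2 | h2
        · simp [h2]
        · exact List.mem_cons_of_mem _ (List.mem_append_left _ h2)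
      rcases List.mem_cons.mp he' with h | h
      · subst h
        exact ⟨p1, hp1mem', hlast1, hle1⟩
      · obtain ⟨x, hx, hxeq, hxle⟩ := hhits2 e' h
        rcases List.mem_cons.mp hx with hh | hh
        · exact ⟨p1, hp1mem', hh ▸ hxeq, hh ▸ hxle⟩
        · exact ⟨x, List.mem_cons_of_mem _ (List.mem_append_right _ hh), hxeq, hxle⟩
    · rw [getLastD_append]
      by_cases h2 : es = []
      · subst h2
        simp only [List.getLastD_nil] at hlast2
        simp only [List.getLastD_cons, List.getLastD_nil]
        rw [hlast2, hlast1]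
      · rw [List.getLastD_cons]
        rw [getLastD_indep h2 p1 e] at hlast2
        exact hlast2
    · rw [getLastD_append, List.getLastD_cons]
      by_cases h2 : es = []
      · subst h2
        simp only [List.getLastD_nil] at hle2 ⊢
        exact le_trans hle2 hle1
      · rw [getLastD_indep h2 p1 e] at hle2
        exact hle2
    · have hcard1 : l1.length + 1 + F.card ≤ Fintype.card V := by
        have := nodup_length_le ((p :: l1).map π) hnd1 F ?_
        · simpa using this
        · intro x hx
          simp only [List.mem_map, List.mem_cons] at hx
          obtain ⟨y, hy, hyeq⟩ := hx
          subst hyeq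
          apply hF
          rcases hy with h | h
          · omega
          · exact le_trans (hbd1 y h).2 heM
      simp only [List.length_append, List.length_cons]
      rw [Nat.succ_mul, Nat.succ_mul]
      omega

/-! ### the index function -/

def iotaFun (l : List ℕ) : ℕ → ℕ := fun k =>
  if k ≤ l.length then (0 :: l).getD k 0 else l.getLastD 0 + (k - l.length)

lemma getD_cons_length : ∀ (l : List ℕ) (p : ℕ), (p :: l).getD l.length 0 = l.getLastD p := by
  intro l
  induction l with
  | nil => intro p; simp
  | cons a l ih =>
    intro p
    show (p :: a :: l).getD (l.length + 1) 0 = _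
    rw [List.getD_cons_succ, ih, List.getLastD_cons]

lemma pseudo_getD {π : ℕ → V} : ∀ {l : List ℕ} {p : ℕ}, Pseudo π p l → ∀ i < l.length,
    (p :: l).getD i 0 < (p :: l).getD (i + 1) 0 ∧
      π ((p :: l).getD (i + 1) 0 - 1) = π ((p :: l).getD i 0) := by
  intro l
  induction l with
  | nil => intro p _ i hi; simp at hi
  | cons x xs ih =>
    intro p hP i hi
    obtain ⟨h1, h2, h3⟩ := hP
    match i with
    | 0 => simpa using ⟨h1, h2⟩
    | (i + 1) =>
      rw [List.getD_cons_succ, List.getD_cons_succ]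
      exact ih h3 i (by simpa using hi)

section Iota

variable {π : ℕ → V} {l : List ℕ} (hP : Pseudo π 0 l)

lemma iota_zero : iotaFun l 0 = 0 := by simp [iotaFun]

lemma iota_le (k : ℕ) (h : k ≤ l.length) : iotaFun l k = (0 :: l).getD k 0 := by
  simp [iotaFun, h]

lemma iota_len : iotaFun l l.length = l.getLastD 0 := by
  rw [iota_le _ le_rfl, getD_cons_length]

lemma iota_straight (j : ℕ) : iotaFun l (l.length + j) = l.getLastD 0 + j := by
  rcases Nat.eq_zero_or_pos j with h | h
  · subst h; simpa using iota_len
  · rw [iotaFun]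
    rw [if_neg (by omega)]
    congr 1
    omega

include hP

lemma iota_lt_succ (k : ℕ) : iotaFun l k < iotaFun l (k + 1) := by
  by_cases h1 : k + 1 ≤ l.length
  · rw [iota_le (k+1) h1, iota_le k (by omega)]
    exact (pseudo_getD hP k (by omega)).1
  · by_cases h2 : k ≤ l.length
    · have hk : k = l.length := by omega
      have h3 := iota_straight (l := l) 1
      rw [hk, iota_len, h3]
      omega
    · rw [iotaFun, iotaFun, if_neg h2, if_neg (by omega)]
      omega

lemma iota_pseudo_succ (k : ℕ) : π (iotaFun l (k + 1) - 1) = π (iotaFun l k) := by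
  by_cases h1 : k + 1 ≤ l.length
  · rw [iota_le (k+1) h1, iota_le k (by omega)]
    exact (pseudo_getD hP k (by omega)).2
  · by_cases h2 : k ≤ l.length
    · have hk : k = l.length := by omega
      have h3 := iota_straight (l := l) 1
      rw [hk, h3, iota_len]
      simp
    · rw [iotaFun, iotaFun, if_neg h2, if_neg (by omega)]
      congr 1
      omega

lemma iota_mono : StrictMono (iotaFun l) :=
  strictMono_nat_of_lt_succ (iota_lt_succ hP)

lemma iota_pos (k : ℕ) (h : 0 < k) : 0 < iotaFun l k := by
  have := iota_mono hP h
  rwa [iota_zero] at this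

lemma iota_edge {E : V → V → Prop} (hplay : IsPlay E π) (k : ℕ) :
    E (π (iotaFun l k)) (π (iotaFun l (k + 1))) := by
  have h1 := hplay (iotaFun l (k + 1) - 1)
  have h2 : 0 < iotaFun l (k + 1) := iota_pos hP (k+1) (by omega)
  rw [iota_pseudo_succ hP, show iotaFun l (k + 1) - 1 + 1 = iotaFun l (k + 1) from by omega] at h1
  exact h1

lemma delta_mono (w : V → V → ℕ) : ∀ (k d : ℕ),
    pathWeight w π (iotaFun l k) + pathWeight w (fun j => π (iotaFun l j)) (k + d)
      ≤ pathWeight w π (iotaFun l (k + d)) + pathWeight w (fun j => π (iotaFun l j)) k := by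
  intro k d
  induction d with
  | zero => simp
  | succ d ih =>
    set K := k + d with hK
    have e1 : pathWeight w (fun j => π (iotaFun l j)) (K + 1)
        = pathWeight w (fun j => π (iotaFun l j)) K
          + w (π (iotaFun l K)) (π (iotaFun l (K + 1))) := pathWeight_succ _ _ _
    set D := iotaFun l (K + 1) - iotaFun l K with hD
    have hD1 : 1 ≤ D := by
      have := iota_lt_succ hP K; omega
    have hDK : iotaFun l (K + 1) = iotaFun l K + D := by
      have := iota_lt_succ hP K; omega
    have e2 : pathWeight w π (iotaFun l (K + 1))
        = pathWeight w π (iotaFun l K)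
          + pathWeight w (fun j => π (iotaFun l K + j)) D := by
      rw [hDK]; exact pathWeight_add _ _ _ _
    have e3 : w (π (iotaFun l K)) (π (iotaFun l (K + 1)))
        ≤ pathWeight w (fun j => π (iotaFun l K + j)) D := by
      have hmem : D - 1 ∈ Finset.range D := by simp; omega
      have := Finset.single_le_sum
        (f := fun j => w (π (iotaFun l K + j)) (π (iotaFun l K + (j + 1)))) (by intros; omega) hmem
      have hh1 : iotaFun l K + (D - 1) = iotaFun l (K + 1) - 1 := by omega
      have hh2 : iotaFun l K + (D - 1 + 1) = iotaFun l (K + 1) := by omega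
      rw [hh1, hh2, iota_pseudo_succ hP] at this
      calc w (π (iotaFun l K)) (π (iotaFun l (K + 1)))
          ≤ ∑ j ∈ Finset.range D, w (π (iotaFun l K + j)) (π (iotaFun l K + (j + 1))) := this
        _ = pathWeight w (fun j => π (iotaFun l K + j)) D := by
            apply Finset.sum_congr rfl
            intros; rfl
    have : k + (d + 1) = K + 1 := by omega
    rw [this, e1, e2]
    omega

lemma delta_zero (w : V → V → ℕ) (k : ℕ) :
    pathWeight w (fun j => π (iotaFun l j)) k ≤ pathWeight w π (iotaFun l k) := by
  have := delta_mono hP w 0 k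
  rw [iota_zero] at this
  simpa [pathWeight] using this

end Iota


/-! ### cycle extraction -/

lemma dedup_chain {E : V → V → Prop} : ∀ (n : ℕ) (l : List V), l.length ≤ n → l ≠ [] →
    List.Chain' E l →
    ∃ l' : List V, l' ≠ [] ∧ List.Chain' E l' ∧ l'.head? = l.head? ∧
      l'.getLast? = l.getLast? ∧ l'.Nodup := by
  intro n
  induction n with
  | zero =>
    intro l hlen hne _
    exact absurd (List.length_eq_zero_iff.mp (by omega)) hne
  | succ n ih =>
    intro l hlen hne hch
    by_cases hnd : l.Nodup
    · exact ⟨l, hne, hch, rfl, rfl, hnd⟩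
    · rw [List.Nodup, List.pairwise_iff_getElem] at hnd
      push_neg at hnd
      obtain ⟨i, j, hi, hj, hij, heq⟩ := hnd
      set l' : List V := l.take (i + 1) ++ l.drop (j + 1) with hl'
      have hlentake : (l.take (i + 1)).length = i + 1 := by
        rw [List.length_take]; omega
      have htne : l.take (i + 1) ≠ [] := by
        intro h; rw [h] at hlentake; simp at hlentake
      have hlast_take : (l.take (i + 1)).getLast? = some l[i] := by
        rw [List.getLast?_eq_getElem?, hlentake]
        simp only [Nat.add_sub_cancel]
        rw [List.getElem?_take_of_lt (by omega), List.getElem?_eq_getElem hi]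
      have hhead' : l'.head? = l.head? := by
        rw [hl', List.head?_eq_getElem?, List.head?_eq_getElem?,
          List.getElem?_append_left (by omega), List.getElem?_take_of_lt (by omega)]
      have hch' : List.Chain' E l' := by
        unfold List.Chain'
        rw [hl', List.isChain_append]
        refine ⟨hch.take _, hch.drop _, ?_⟩
        intro x hx y hy
        rw [hlast_take] at hx
        rw [List.head?_eq_getElem?, List.getElem?_drop] at hy
        injection hx with hx
        have hjy : j + 1 + 0 < l.length := by
          by_contra hcon
          rw [List.getElem?_eq_none (by omega)] at hy
          simp at hy
        rw [List.getElem?_eq_getElem hjy] at hy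
        injection hy with hy
        subst hx; subst hy
        rw [heq]
        have := List.isChain_iff_getElem.mp hch j (by omega)
        simpa [List.get_eq_getElem, show j + 1 + 0 = j + 1 by omega] using this
      have hlast' : l'.getLast? = l.getLast? := by
        by_cases hcase : j + 1 < l.length
        · have hdlast : (l.drop (j + 1)).getLast? = l.getLast? := by
            rw [List.getLast?_eq_getElem?, List.length_drop, List.getElem?_drop,
              List.getLast?_eq_getElem?]
            congr 1
            omega
          rw [hl', List.getLast?_append, hdlast, List.getLast?_eq_getElem?,
            List.getElem?_eq_getElem (by omega : l.length - 1 < l.length)]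
          simp
        · have hdrop : l.drop (j + 1) = [] := by
            apply List.drop_eq_nil_of_le; omega
          rw [hl', hdrop, List.append_nil, hlast_take, heq,
            List.getLast?_eq_getElem?]
          rw [show l.length - 1 = j by omega, List.getElem?_eq_getElem hj]
      have hlen' : l'.length ≤ n := by
        rw [hl', List.length_append, hlentake, List.length_drop]
        omega
      have hne' : l' ≠ [] := by
        rw [hl']
        intro h
        rw [List.append_eq_nil_iff] at h
        exact htne h.1
      obtain ⟨l'', h1, h2, h3, h4, h5⟩ := ih l' hlen' hne' hch'
      exact ⟨l'', h1, h2, by rw [h3, hhead'], by rw [h4, hlast'], h5⟩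


lemma cycle_extract {E : V → V → Prop} {π : ℕ → V} (hplay : IsPlay E π) {u q : ℕ}
    (hlt : u < q) (heq : π u = π q) :
    ∃ ν : List V, ν ≠ [] ∧ ν.Nodup ∧ List.Chain' E ν ∧ ν.head? = some (π u) ∧
      (∀ x, ν.getLast? = some x → E x (π u)) := by
  set W : List V := (List.range (q - u)).map (fun j => π (u + j)) with hW
  have hWlen : W.length = q - u := by simp [hW]
  have hWne : W ≠ [] := by
    intro h; rw [h] at hWlen; simp at hWlen; omega
  have hWch : List.Chain' E W := by
    unfold List.Chain'
    rw [hW, List.isChain_map]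
    rw [show q - u = (q - u - 1) + 1 by omega, List.isChain_range_succ]
    intro i _
    rw [show u + (i + 1) = (u + i) + 1 by omega]
    exact hplay (u + i)
  have hWhead : W.head? = some (π u) := by
    rw [List.head?_eq_getElem?, hW, List.getElem?_map,
      List.getElem?_range (by omega : 0 < q - u)]
    simp
  have hWlast : W.getLast? = some (π (q - 1)) := by
    rw [List.getLast?_eq_getElem?, hW, List.getElem?_map, hWlen,
      List.getElem?_range (by omega : q - u - 1 < q - u)]
    simp only [Option.map_some]
    congr 2
    omega
  obtain ⟨ν, h1, h2, h3, h4, h5⟩ := dedup_chain W.length W le_rfl hWne hWch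
  refine ⟨ν, h1, h5, h2, by rw [h3, hWhead], ?_⟩
  intro x hx
  rw [h4, hWlast] at hx
  injection hx with hx
  subst hx
  have := hplay (q - 1)
  rw [show q - 1 + 1 = q by omega] at this
  rwa [← heq] at this

/-! ### the weight transfer for unrealized components -/

lemma caseU_z {w' : V → V → ℕ} {S : Set V} {π π' : ℕ → V} {l : List ℕ} (hP : Pseudo π 0 l)
    {A mb j1 : ℕ} (hagree : ∀ k ≤ A, π' k = π (iotaFun l k))
    (hmb : mb ≤ j1) (hj1A : j1 ≤ A)
    (hcost' : cost w' S π' = (pathWeight w' π' j1 : ℕ∞))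
    (hcostπ : cost w' S π = (pathWeight w' π (iotaFun l j1) : ℕ∞)) (z : ℕ∞) :
    ((pathWeight w' π' mb : ℕ∞) + z ≤ cost w' S π' →
      (pathWeight w' π (iotaFun l mb) : ℕ∞) + z ≤ cost w' S π) ∧
    ((pathWeight w' π' mb : ℕ∞) + z < cost w' S π' →
      (pathWeight w' π (iotaFun l mb) : ℕ∞) + z < cost w' S π) := by
  have hpw1 : pathWeight w' π' j1 = pathWeight w' (fun j => π (iotaFun l j)) j1 :=
    pathWeight_congr (fun k hk => hagree k (by omega))
  have hpw2 : pathWeight w' π' mb = pathWeight w' (fun j => π (iotaFun l j)) mb :=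
    pathWeight_congr (fun k hk => hagree k (by omega))
  have hkey : pathWeight w' π (iotaFun l mb) + pathWeight w' π' j1
      ≤ pathWeight w' π (iotaFun l j1) + pathWeight w' π' mb := by
    have := delta_mono hP w' mb (j1 - mb)
    rw [show mb + (j1 - mb) = j1 by omega] at this
    rw [hpw1, hpw2]
    exact this
  rw [hcost', hcostπ]
  induction z using ENat.recTopCoe with
  | top =>
    constructor
    · intro h
      exfalso
      rw [add_top] at h
      exact (WithTop.not_top_le_coe _) h
    · intro h
      exfalso
      rw [add_top] at h
      exact absurd h (by simp)
  | coe z =>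
    constructor
    · intro h
      have h' : pathWeight w' π' mb + z ≤ pathWeight w' π' j1 := by exact_mod_cast h
      have : pathWeight w' π (iotaFun l mb) + z ≤ pathWeight w' π (iotaFun l j1) := by omega
      exact_mod_cast this
    · intro h
      have h' : pathWeight w' π' mb + z < pathWeight w' π' j1 := by exact_mod_cast h
      have : pathWeight w' π (iotaFun l mb) + z < pathWeight w' π (iotaFun l j1) := by omega
      exact_mod_cast this

/-! ### payoff transfer -/

lemma cost_concat_split {w' : V → V → ℕ} {S : Set V} {π' ρ : ℕ → V} {m : ℕ}
    (hU : ∀ j ≤ m, π' j ∉ S) :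
    cost w' S (concatPlay (histList π' m) ρ)
      = (pathWeight w' π' m : ℕ∞) + ((w' (π' m) (ρ 0) : ℕ∞) + cost w' S ρ) := by
  set P' := concatPlay (histList π' m) ρ with hP'
  have h1 : ∀ k ≤ m, P' k ∉ S := fun k hk => by
    rw [hP', concatPlay_eq_of_le _ _ hk]; exact hU k hk
  rw [cost_split h1]
  have h2 : pathWeight w' P' (m + 1) = pathWeight w' π' m + w' (π' m) (ρ 0) := by
    rw [pathWeight_succ]
    congr 1
    · exact pathWeight_congr (fun k hk => concatPlay_eq_of_le _ _ (by omega))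
    · congr 1
      · exact concatPlay_eq_of_le _ _ le_rfl
      · have := concatPlay_shift π' ρ m 0
        simpa using this
  have h3 : (fun j => P' (m + 1 + j)) = ρ := by
    funext j
    exact concatPlay_shift π' ρ m j
  rw [h2, h3]
  push_cast
  ring

lemma transfer {t : ℕ} (w : Fin t → V → V → ℕ) (T : Fin t → Set V)
    (π π' ρ : ℕ → V) (m u0 : ℕ) (hlast : π' m = π u0)
    (hcomp : ∀ i : Fin t,
      ((∃ j ≤ m, π' j ∈ T i) ∧ (∃ n ≤ u0, π n ∈ T i)) ∨
      ((∀ j ≤ m, π' j ∉ T i) ∧ (∀ n ≤ u0, π n ∉ T i) ∧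
        ∀ z : ℕ∞,
          ((pathWeight (w i) π' m : ℕ∞) + z ≤ cost (w i) (T i) π' →
            (pathWeight (w i) π u0 : ℕ∞) + z ≤ cost (w i) (T i) π) ∧
          ((pathWeight (w i) π' m : ℕ∞) + z < cost (w i) (T i) π' →
            (pathWeight (w i) π u0 : ℕ∞) + z < cost (w i) (T i) π)))
    (hlt : pay w T (concatPlay (histList π' m) ρ) < pay w T π') :
    pay w T (concatPlay (histList π u0) ρ) < pay w T π := by
  rw [Pi.lt_def] at hlt ⊢
  obtain ⟨hle, i0, hi0⟩ := hlt
  have key : ∀ i : Fin t,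
      (pay w T (concatPlay (histList π u0) ρ) i ≤ pay w T π i) ∧
      (pay w T (concatPlay (histList π' m) ρ) i < pay w T π' i →
        pay w T (concatPlay (histList π u0) ρ) i < pay w T π i) := by
    intro i
    rcases hcomp i with ⟨⟨j, hj, hjT⟩, ⟨nn, hnn, hnT⟩⟩ | ⟨hU1, hU2, hz⟩
    · have e1 : pay w T (concatPlay (histList π' m) ρ) i = pay w T π' i := by
        apply cost_congr_of_agree (fun k hk => concatPlay_eq_of_le _ _ hk)
        exact ⟨j, hj, by rw [concatPlay_eq_of_le _ _ hj]; exact hjT⟩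
      have e2 : pay w T (concatPlay (histList π u0) ρ) i = pay w T π i := by
        apply cost_congr_of_agree (fun k hk => concatPlay_eq_of_le _ _ hk)
        exact ⟨nn, hnn, by rw [concatPlay_eq_of_le _ _ hnn]; exact hnT⟩
      refine ⟨le_of_eq e2, fun h => ?_⟩
      rw [e1] at h
      exact absurd h (lt_irrefl _)
    · have s1 : pay w T (concatPlay (histList π' m) ρ) i
          = (pathWeight (w i) π' m : ℕ∞) + ((w i (π' m) (ρ 0) : ℕ∞) + cost (w i) (T i) ρ) :=
        cost_concat_split hU1
      have s2 : pay w T (concatPlay (histList π u0) ρ) i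
          = (pathWeight (w i) π u0 : ℕ∞) + ((w i (π' m) (ρ 0) : ℕ∞) + cost (w i) (T i) ρ) := by
        have := cost_concat_split (w' := w i) (S := T i) (ρ := ρ) hU2
        rw [← hlast] at this
        exact this
      constructor
      · have h1 : pay w T (concatPlay (histList π' m) ρ) i ≤ pay w T π' i := hle i
        rw [s1] at h1
        rw [s2]
        exact (hz _).1 h1
      · intro h
        rw [s1] at h
        rw [s2]
        exact (hz _).2 h
  exact ⟨fun i => (key i).1, i0, (key i0).2 hi0⟩

/-! ### deviation winning lemmas -/

lemma devwin_trivial {t : ℕ} {E : V → V → Prop} (hE : ∀ u, ∃ v, E u v) (V0 : Set V) (z : V)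
    (w : Fin t → V → V → ℕ) (T : Fin t → Set V) (π' : ℕ → V) (m : ℕ) (v : V)
    (hall : ∀ ρ : ℕ → V, ¬ pay w T (concatPlay (histList π' m) ρ) < pay w T π') :
    Player0Wins E V0 v (fun ρ => ¬ pay w T (concatPlay (histList π' m) ρ) < pay w T π') :=
  ⟨defStrat hE z, isStrategy_defStrat hE V0 z, fun ρ _ _ _ => hall ρ⟩

lemma pay_concat_eq {t : ℕ} (w : Fin t → V → V → ℕ) (T : Fin t → Set V) (π' ρ : ℕ → V)
    (m : ℕ) (hreal : ∀ i : Fin t, ∃ j ≤ m, π' j ∈ T i) :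
    pay w T (concatPlay (histList π' m) ρ) = pay w T π' := by
  funext i
  obtain ⟨j, hj, hjT⟩ := hreal i
  apply cost_congr_of_agree (fun k hk => concatPlay_eq_of_le _ _ hk)
  exact ⟨j, hj, by rw [concatPlay_eq_of_le _ _ hj]; exact hjT⟩

lemma devwin_K2 {t : ℕ} {E : V → V → Prop} (hE : ∀ u, ∃ v, E u v) (V0 : Set V) (v0 : V)
    (w : Fin t → V → V → ℕ) (T : Fin t → Set V) (σ0 : List V → V) (π : ℕ → V)
    (hstrat : IsStrategy E V0 σ0) (hplay : IsPlay E π) (h0 : π 0 = v0)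
    (hcons : PlayConsistent V0 σ0 π) (hpar : ParetoOptimal E V0 v0 w T σ0 π)
    (π' : ℕ → V) (m u0 : ℕ) (v : V)
    (hu0 : π u0 ∉ V0) (hedge : E (π u0) v)
    (htrans : ∀ ρ : ℕ → V, pay w T (concatPlay (histList π' m) ρ) < pay w T π' →
      pay w T (concatPlay (histList π u0) ρ) < pay w T π) :
    Player0Wins E V0 v (fun ρ => ¬ pay w T (concatPlay (histList π' m) ρ) < pay w T π') := by
  classical
  set B := histList π u0 with hB
  set σ' : List V → V := fun lst =>
    if List.Chain' E (B ++ lst) then σ0 (B ++ lst) else defStrat hE v0 lst with hσ'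
  refine ⟨σ', ?_, ?_⟩
  · intro lst u hchain hu
    show E u (if List.Chain' E (B ++ (lst ++ [u])) then σ0 (B ++ (lst ++ [u]))
      else defStrat hE v0 (lst ++ [u]))
    split_ifs with hg
    · rw [← List.append_assoc] at hg ⊢
      exact hstrat (B ++ lst) u hg hu
    · exact isStrategy_defStrat hE V0 v0 lst u hchain hu
  · intro ρ hρplay hρ0 hρcons
    set P := concatPlay (histList π u0) ρ with hP
    have hPplay : IsPlay E P := isPlay_concat hplay hρplay (by rw [hρ0]; exact hedge)
    have hP0 : P 0 = v0 := by
      rw [hP, concatPlay_eq_of_le _ _ (Nat.zero_le _), h0]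
    have hPcons : PlayConsistent V0 σ0 P := by
      intro k hk
      rcases lt_trichotomy k u0 with h | h | h
      · have e1 : P k = π k := concatPlay_eq_of_le _ _ (le_of_lt h)
        have e2 : P (k + 1) = π (k + 1) := concatPlay_eq_of_le _ _ (by omega)
        rw [e2, hcons k (by rwa [e1] at hk)]
        congr 1
        exact histList_congr (fun j hj => (concatPlay_eq_of_le _ _ (by omega)).symm)
      · exfalso
        subst h
        rw [hP, concatPlay_eq_of_le _ _ le_rfl] at hk
        exact hu0 hk
      · obtain ⟨j, rfl⟩ : ∃ j, k = u0 + 1 + j := ⟨k - (u0 + 1), by omega⟩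
        have e3 : P (u0 + 1 + j) = ρ j := concatPlay_shift π ρ u0 j
        have hcons2 := hρcons j (by rwa [e3] at hk)
        have hhist : histList P (u0 + 1 + j) = B ++ histList ρ j := histList_concat π ρ u0 j
        have e4 : P (u0 + 1 + (j + 1)) = ρ (j + 1) := concatPlay_shift π ρ u0 (j + 1)
        rw [show u0 + 1 + j + 1 = u0 + 1 + (j + 1) by omega, e4, hcons2, hhist]
        show σ' (histList ρ j) = _
        rw [hσ']
        simp only []
        rw [if_pos]
        rw [← hhist]
        exact chain'_histList hPplay _
    intro hlt
    exact hpar ⟨P, hPplay, hP0, hPcons, htrans ρ hlt⟩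


/-! ### building the lasso play -/

lemma getD_zero_of_head? {ν : List V} {x : V} (h : ν.head? = some x) (d : V) :
    ν.getD 0 d = x := by
  cases ν with
  | nil => simp at h
  | cons a l => simp at h; simp [h]

lemma getD_last_of_getLast? {ν : List V} {x : V} (h : ν.getLast? = some x) (d : V) :
    ν.getD (ν.length - 1) d = x := by
  rw [List.getLast?_eq_getElem?] at h
  rw [List.getD_eq_getElem?_getD, h]
  rfl

def lassoPlay (π : ℕ → V) (l : List ℕ) (a : ℕ) (ν : List V) : ℕ → V := fun m =>
  if m < a then π (iotaFun l m) else ν.getD ((m - a) % ν.length) (π 0)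

section Lasso

variable {E : V → V → Prop} {π : ℕ → V} {l : List ℕ} {a : ℕ} {ν : List V}

lemma lassoPlay_loop {m : ℕ} (hm : a ≤ m) :
    lassoPlay π l a ν m = ν.getD ((m - a) % ν.length) (π 0) := by
  rw [lassoPlay, if_neg (by omega)]

variable (hP : Pseudo π 0 l) (hplay : IsPlay E π) (hνne : ν ≠ [])
  (hνhead : ν.head? = some (π (iotaFun l a)))

lemma lassoPlay_len_pos (hνne : ν ≠ []) : 0 < ν.length := List.length_pos_iff.mpr hνne

include hνne hνhead

lemma lassoPlay_agree : ∀ m ≤ a, lassoPlay π l a ν m = π (iotaFun l m) := by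
  intro m hm
  rcases lt_or_eq_of_le hm with h | h
  · rw [lassoPlay, if_pos h]
  · subst h
    rw [lassoPlay_loop le_rfl]
    simp only [Nat.sub_self, Nat.zero_mod]
    exact getD_zero_of_head? hνhead _

lemma lassoPlay_lasso : IsLasso (lassoPlay π l a ν) a ν.length := by
  refine ⟨lassoPlay_len_pos hνne, ?_⟩
  intro k hk
  rw [lassoPlay_loop (by omega), lassoPlay_loop hk]
  congr 1
  rw [show k + ν.length - a = (k - a) + ν.length by omega, Nat.add_mod_right]

include hP hplay

lemma lassoPlay_isPlay
    (hνchain : List.Chain' E ν)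
    (hνwrap : ∀ x, ν.getLast? = some x → E x (π (iotaFun l a))) :
    IsPlay E (lassoPlay π l a ν) := by
  intro m
  set b := ν.length with hb
  have hb0 : 0 < b := lassoPlay_len_pos hνne
  by_cases h1 : m + 1 ≤ a
  · rw [lassoPlay_agree hνne hνhead m (by omega), lassoPlay_agree hνne hνhead (m+1) h1]
    exact iota_edge hP hplay m
  · by_cases h2 : m < a
    · -- m + 1 = a
      have hma : m + 1 = a := by omega
      rw [lassoPlay_agree hνne hνhead m (by omega), lassoPlay_agree hνne hνhead (m+1) (by omega)]
      exact iota_edge hP hplay m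
    · -- loop
      rw [lassoPlay_loop (by omega), lassoPlay_loop (by omega : a ≤ m + 1)]
      set j := (m - a) % b with hj
      have hjb : j < b := Nat.mod_lt _ hb0
      have hjj : (m - a) % b = j % b := by
        rw [← hj]
        exact (Nat.mod_eq_of_lt hjb).symm
      have hsucc : (m + 1 - a) % b = (j + 1) % b := by
        calc (m + 1 - a) % b = ((m - a) + 1) % b := by rw [show m + 1 - a = m - a + 1 by omega]
          _ = ((m - a) % b + 1 % b) % b := by rw [Nat.add_mod]
          _ = (j % b + 1 % b) % b := by rw [hjj]
          _ = (j + 1) % b := by rw [← Nat.add_mod]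
      by_cases h3 : j + 1 < b
      · have : (j + 1) % b = j + 1 := Nat.mod_eq_of_lt h3
        rw [hsucc, this]
        have hc := List.isChain_iff_getElem.mp hνchain j (by omega)
        rw [List.getD_eq_getElem _ _ (by omega), List.getD_eq_getElem _ _ (by omega)]
        simpa [List.get_eq_getElem] using hc
      · have hj1 : j + 1 = b := by omega
        have : (j + 1) % b = 0 := by rw [hj1, Nat.mod_self]
        rw [hsucc, this]
        have hlast : ν.getLast? = some (ν.getD j (π 0)) := by
          rw [List.getLast?_eq_getElem?, List.getD_eq_getElem?_getD,
            show ν.length - 1 = j by omega]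
          rw [List.getElem?_eq_getElem (by omega)]
          rfl
        have := hνwrap _ hlast
        rw [getD_zero_of_head? hνhead]
        exact this

end Lasso


/-! ### component classification -/

lemma classify {w' : V → V → ℕ} {S : Set V} {π π' : ℕ → V} {l : List ℕ} (hP : Pseudo π 0 l)
    (hSex : ∃ n, π n ∈ S)
    {A k1 : ℕ} (hk1A : k1 ≤ A)
    (hagree : ∀ k ≤ A, π' k = π (iotaFun l k))
    (hhit : π' k1 ∈ S) (hι : iotaFun l k1 ≤ Nat.find hSex)
    {m mb : ℕ} (hmb : mb ≤ m) (hmbA : mb ≤ A)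
    (hmclass : k1 ≤ mb ∨ mb = m) :
    ((∃ j ≤ m, π' j ∈ S) ∧ (∃ n ≤ iotaFun l mb, π n ∈ S)) ∨
    ((∀ j ≤ m, π' j ∉ S) ∧ (∀ n ≤ iotaFun l mb, π n ∉ S) ∧
      ∀ z : ℕ∞,
        ((pathWeight w' π' m : ℕ∞) + z ≤ cost w' S π' →
          (pathWeight w' π (iotaFun l mb) : ℕ∞) + z ≤ cost w' S π) ∧
        ((pathWeight w' π' m : ℕ∞) + z < cost w' S π' →
          (pathWeight w' π (iotaFun l mb) : ℕ∞) + z < cost w' S π)) := by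
  have hex' : ∃ k, π' k ∈ S := ⟨k1, hhit⟩
  have hj1k1 : Nat.find hex' ≤ k1 := Nat.find_le hhit
  set j1 := Nat.find hex' with hj1
  have hj1S : π' j1 ∈ S := Nat.find_spec hex'
  have hιj1 : iotaFun l j1 = Nat.find hSex := by
    apply le_antisymm
    · exact le_trans ((iota_mono hP).monotone hj1k1) hι
    · apply Nat.find_le
      rw [← hagree j1 (by omega)]
      exact hj1S
  by_cases hc : j1 ≤ mb
  · left
    refine ⟨⟨j1, by omega, hj1S⟩, ⟨Nat.find hSex, ?_, Nat.find_spec hSex⟩⟩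
    rw [← hιj1]
    exact (iota_mono hP).monotone hc
  · right
    have hmbm : mb = m := by
      rcases hmclass with h | h
      · omega
      · exact h
    subst hmbm
    refine ⟨?_, ?_, ?_⟩
    · intro j hj
      exact Nat.find_min hex' (by omega)
    · intro n hn hnS
      have h1 : Nat.find hSex ≤ n := Nat.find_le hnS
      have h2 : iotaFun l mb < iotaFun l j1 := (iota_mono hP) (by omega)
      omega
    · intro z
      apply caseU_z hP hagree (by omega : mb ≤ j1) (by omega : j1 ≤ A)
      · exact cost_eq_of_first hj1S (fun k hk => Nat.find_min hex' hk)
      · apply cost_eq_of_first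
        · rw [hιj1]; exact Nat.find_spec hSex
        · intro k hk
          rw [hιj1] at hk
          exact Nat.find_min hSex hk

lemma classify_inf {w' : V → V → ℕ} {S : Set V} {π π' : ℕ → V} (hnS : ∀ n, π n ∉ S)
    (hval : ∀ j, ∃ u, π' j = π u) (m u0 : ℕ) :
    (∀ j ≤ m, π' j ∉ S) ∧ (∀ n ≤ u0, π n ∉ S) ∧
      ∀ z : ℕ∞,
        ((pathWeight w' π' m : ℕ∞) + z ≤ cost w' S π' →
          (pathWeight w' π u0 : ℕ∞) + z ≤ cost w' S π) ∧
        ((pathWeight w' π' m : ℕ∞) + z < cost w' S π' →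
          (pathWeight w' π u0 : ℕ∞) + z < cost w' S π) := by
  have hc' : cost w' S π' = ⊤ := cost_eq_top (fun n => by
    obtain ⟨u, hu⟩ := hval n
    rw [hu]
    exact hnS u)
  have hcπ : cost w' S π = ⊤ := cost_eq_top hnS
  refine ⟨?_, fun n _ => hnS n, ?_⟩
  · intro j _ hjS
    obtain ⟨u, hu⟩ := hval j
    rw [hu] at hjS
    exact hnS u hjS
  · intro z
    rw [hc', hcπ]
    constructor
    · intro _; exact le_top
    · intro h
      rw [lt_top_iff_ne_top] at h ⊢
      intro hcon
      apply h
      rw [ENat.add_eq_top] at hcon ⊢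
      rcases hcon with h1 | h1
      · exact absurd h1 (WithTop.natCast_ne_top _)
      · right; exact h1

/-! ### sorted list helpers -/

lemma sorted_le_getLastD : ∀ {L : List ℕ}, List.Pairwise (· ≤ ·) L → ∀ x ∈ L, x ≤ L.getLastD 0 := by
  intro L
  induction L with
  | nil => intro _ x hx; simp at hx
  | cons a l ih =>
    intro hs x hx
    rw [List.pairwise_cons] at hs
    rw [List.getLastD_cons]
    by_cases hl : l = []
    · subst hl
      simp only [List.mem_cons, List.not_mem_nil, or_false] at hx
      subst hx
      rw [List.getLastD_nil]
    · rcases List.mem_cons.mp hx with h | h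
      · subst h
        exact hs.1 _ (getLastD_mem l hl)
      · have := ih hs.2 x h
        rwa [getLastD_indep hl 0 a] at this

lemma sorted_chain_zero {L : List ℕ} (hs : List.Pairwise (· ≤ ·) L) :
    List.Chain (· ≤ ·) 0 L := by
  cases L with
  | nil => exact List.Chain.nil
  | cons a l =>
    refine List.chain_cons.mpr ⟨Nat.zero_le _, ?_⟩
    exact hs.isChain

lemma pigeon [Fintype V] (π : ℕ → V) (x0 : ℕ) :
    ∃ j j' : ℕ, j < j' ∧ j' ≤ Fintype.card V ∧ π (x0 + j) = π (x0 + j') := by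
  have hcard : Fintype.card V < Fintype.card (Fin (Fintype.card V + 1)) := by simp
  obtain ⟨a, b, hne, heq⟩ := Fintype.exists_ne_map_eq_of_card_lt
    (fun j : Fin (Fintype.card V + 1) => π (x0 + (j : ℕ))) hcard
  rcases lt_or_gt_of_ne (fun h => hne (Fin.ext h)) with h | h
  · exact ⟨a, b, h, by omega, heq⟩
  · exact ⟨b, a, h, by omega, heq.symm⟩


/-! ### the forward direction -/

lemma forward [Fintype V] {t : ℕ} (E : V → V → Prop) (hE : ∀ u, ∃ v, E u v) (V0 : Set V)
    (v0 : V) (w0 : V → V → ℕ) (T0 : Set V) (w : Fin t → V → V → ℕ) (T : Fin t → Set V)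
    (c : ℕ) (σ0 : List V → V) (π : ℕ → V)
    (hstrat : IsStrategy E V0 σ0) (hplay : IsPlay E π) (h0 : π 0 = v0)
    (hcons : PlayConsistent V0 σ0 π) (hpar : ParetoOptimal E V0 v0 w T σ0 π)
    (hcost : cost w0 T0 π ≤ (c : ℕ∞)) :
    ∃ (π' : ℕ → V) (a b : ℕ), IsPlay E π' ∧ π' 0 = v0 ∧ IsLasso π' a b ∧
      a ≤ (t + 1) * Fintype.card V ∧ b ≤ Fintype.card V ∧
      cost w0 T0 π' ≤ (c : ℕ∞) ∧
      ∀ (m : ℕ) (v : V), π' m ∉ V0 → E (π' m) v → v ≠ π' (m + 1) →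
        Player0Wins E V0 v
          (fun ρ => ¬ pay w T (concatPlay (histList π' m) ρ) < pay w T π') := by
  classical
  have hT0ex : ∃ n, π n ∈ T0 := by
    apply cost_ne_top
    intro hcon
    rw [hcon] at hcost
    exact absurd hcost (by simp)
  set cV := Fintype.card V with hcVdef
  set n0 := Nat.find hT0ex with hn0
  set findT : Fin t → ℕ := fun i => if h : ∃ n, π n ∈ T i then Nat.find h else 0 with hfindT
  set M : Finset ℕ :=
    insert n0 ((Finset.univ.filter (fun i : Fin t => ∃ n, π n ∈ T i)).image findT) with hM
  set L := M.sort (· ≤ ·) with hLdef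
  have hsorted : List.Pairwise (· ≤ ·) L := Finset.pairwise_sort _ _
  have hmemL : ∀ x, x ∈ L ↔ x ∈ M := fun x => Finset.mem_sort _
  set N := L.getLastD 0 with hNdef
  have hn0L : n0 ∈ L := (hmemL n0).mpr (Finset.mem_insert_self _ _)
  have hLne : L ≠ [] := fun hcon => by rw [hcon] at hn0L; exact absurd hn0L List.not_mem_nil
  have hLbd : ∀ x ∈ L, x ≤ N := sorted_le_getLastD hsorted
  have hchain0 : List.Chain (· ≤ ·) 0 L := sorted_chain_zero hsorted
  have hs1 : 1 ≤ L.length := List.length_pos_iff.mpr hLne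
  have hfindTL : ∀ (i : Fin t) (h : ∃ n, π n ∈ T i), Nat.find h ∈ L := by
    intro i h
    rw [hmemL]
    apply Finset.mem_insert_of_mem
    have : findT i = Nat.find h := by rw [hfindT]; exact dif_pos h
    rw [← this]
    exact Finset.mem_image_of_mem _ (Finset.mem_filter.mpr ⟨Finset.mem_univ _, h⟩)
  -- common machinery, parameterized by the milestone traversal
  have main : ∀ (F : Finset V), (∀ q ≤ N, π q ∉ F) → ∃ (l : List ℕ),
      Pseudo π 0 l ∧ (∀ e ∈ L, ∃ k ≤ l.length, π (iotaFun l k) = π e ∧ iotaFun l k ≤ e) ∧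
      π (l.getLastD 0) = π N ∧ l.getLastD 0 ≤ N ∧
      l.length + L.length * (F.card + 1) ≤ L.length * cV := by
    intro F hF
    obtain ⟨l, hPl, hbdl, hhits, hlastl, hlel, hlenl⟩ :=
      mu_exists π F N hF L 0 hchain0 hLbd (Nat.zero_le _)
    refine ⟨l, hPl, ?_, hlastl, hlel, hlenl⟩
    intro e he
    obtain ⟨x, hx, hxeq, hxle⟩ := hhits e he
    rw [List.mem_iff_getElem] at hx
    obtain ⟨k, hk, hkeq⟩ := hx
    have hkl : k ≤ l.length := by
      simp only [List.length_cons] at hk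
      omega
    have hιk : iotaFun l k = x := by
      rw [iota_le k hkl, List.getD_eq_getElem _ _ hk, hkeq]
    exact ⟨k, hkl, by rw [hιk]; exact hxeq, by rw [hιk]; exact hxle⟩
  by_cases hINF : ∀ i : Fin t, ∃ n, π n ∈ T i
  -- ============ CASE A : all environment objectives reachable ============
  · have hsA : L.length ≤ t + 1 := by
      rw [hLdef, Finset.length_sort, hM]
      calc M.card ≤ _ + 1 := Finset.card_insert_le _ _
        _ ≤ t + 1 := by
          have h1 := Finset.card_image_le (s := Finset.univ.filter
            (fun i : Fin t => ∃ n, π n ∈ T i)) (f := findT)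
          have h2 := Finset.card_filter_le (Finset.univ : Finset (Fin t))
            (fun i : Fin t => ∃ n, π n ∈ T i)
          simp only [Finset.card_univ, Fintype.card_fin] at h2
          omega
    have hQA : ∃ k, 1 ≤ k ∧ ∃ u, u < N + k ∧ π u = π (N + k) := by
      obtain ⟨j, j', hjj, hj'cV, heq⟩ := pigeon π N
      exact ⟨j', by omega, ⟨N + j, by omega, heq⟩⟩
    set q := Nat.find hQA with hq
    have hq1 : 1 ≤ q := (Nat.find_spec hQA).1
    set F : Finset V := (Finset.range (q - 1)).image (fun j => π (N + 1 + j)) with hFdef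
    have hFfresh : ∀ pos ≤ N, π pos ∉ F := by
      intro pos hpos hmem
      rw [hFdef, Finset.mem_image] at hmem
      obtain ⟨j, hj, hjeq⟩ := hmem
      rw [Finset.mem_range] at hj
      apply Nat.find_min hQA (show 1 + j < q by omega)
      exact ⟨by omega, ⟨pos, by omega, by rw [show N + (1 + j) = N + 1 + j by omega, hjeq]⟩⟩
    have hFcard : F.card = q - 1 := by
      rw [hFdef, Finset.card_image_of_injOn, Finset.card_range]
      intro j hj j2 hj2 heq2
      simp only at heq2
      simp only [Finset.coe_range, Set.mem_Iio] at hj hj2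
      by_contra hne2
      rcases lt_or_gt_of_ne hne2 with h | h
      · apply Nat.find_min hQA (show 1 + j2 < q by omega)
        exact ⟨by omega, ⟨N + 1 + j, by omega,
          by rw [show N + (1 + j2) = N + 1 + j2 by omega, heq2]⟩⟩
      · apply Nat.find_min hQA (show 1 + j < q by omega)
        exact ⟨by omega, ⟨N + 1 + j2, by omega,
          by rw [show N + (1 + j) = N + 1 + j by omega, heq2]⟩⟩
    obtain ⟨l, hPl, hmile, hlastl, hlel, hlenl⟩ := main F hFfresh
    rw [hFcard, show q - 1 + 1 = q by omega] at hlenl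
    set a₀ := l.length with ha₀
    set p1 := l.getLastD 0 with hp1def
    have hιa₀ : iotaFun l a₀ = p1 := iota_len
    -- obtain the loop
    obtain ⟨a, ν, ha₀a, habound, hνne, hνlen, hνchain, hνhead, hνwrap⟩ :
        ∃ (a : ℕ) (ν : List V), a₀ ≤ a ∧ a ≤ (t + 1) * cV ∧ ν ≠ [] ∧ ν.length ≤ cV ∧
          List.Chain' E ν ∧ ν.head? = some (π (iotaFun l a)) ∧
          (∀ x, ν.getLast? = some x → E x (π (iotaFun l a))) := by
      have hbound0 : a₀ + L.length * q ≤ L.length * cV := hlenl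
      have hLq : q ≤ L.length * q := Nat.le_mul_of_pos_left q (by omega)
      have hLcV : L.length * cV ≤ (t + 1) * cV := Nat.mul_le_mul_right cV hsA
      by_cases hp1 : p1 < N
      · obtain ⟨ν, h1, h2, h3, h4, h5⟩ := cycle_extract hplay hp1 (by simpa using hlastl)
        refine ⟨a₀, ν, le_rfl, by omega, h1, ?_, h3, by rw [hιa₀]; exact h4,
          by rw [hιa₀]; exact h5⟩
        have := nodup_length_le ν h2 ∅ (by simp)
        simpa using this
      · have hp1N : p1 = N := by
          have := hlel; omega
        obtain ⟨u1, hu1lt, hu1eq⟩ := (Nat.find_spec hQA).2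
        obtain ⟨ν, h1, h2, h3, h4, h5⟩ := cycle_extract hplay hu1lt hu1eq
        have hιa : iotaFun l (a₀ + q) = N + q := by
          rw [iota_straight, ← hp1def, hp1N]
        refine ⟨a₀ + q, ν, by omega, by omega, h1, ?_, h3,
          by rw [hιa, ← hu1eq]; exact h4, by rw [hιa, ← hu1eq]; exact h5⟩
        have := nodup_length_le ν h2 ∅ (by simp)
        simpa using this
    -- build the lasso
    set b := ν.length with hbdef
    set π' : ℕ → V := lassoPlay π l a ν with hπ'def
    have hagree : ∀ m ≤ a, π' m = π (iotaFun l m) := lassoPlay_agree hνne hνhead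
    have hπ'play : IsPlay E π' := lassoPlay_isPlay hPl hplay hνne hνhead hνchain hνwrap
    have hπ'0 : π' 0 = v0 := by
      rw [hagree 0 (Nat.zero_le _), iota_zero, h0]
    have hπ'lasso : IsLasso π' a b := lassoPlay_lasso hνne hνhead
    -- milestone hits in π'
    have hhitT : ∀ i : Fin t, ∃ k ≤ a₀, π' k ∈ T i ∧
        iotaFun l k ≤ Nat.find (hINF i) := by
      intro i
      obtain ⟨k, hk, hkeq, hkle⟩ := hmile (Nat.find (hINF i)) (hfindTL i (hINF i))
      refine ⟨k, hk, ?_, hkle⟩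
      rw [hagree k (by omega), hkeq]
      exact Nat.find_spec (hINF i)
    -- cost0
    have hcost0 : cost w0 T0 π' ≤ (c : ℕ∞) := by
      obtain ⟨k0, hk0, hk0eq, hk0le⟩ := hmile n0 hn0L
      have hπ'k0 : π' k0 ∈ T0 := by
        rw [hagree k0 (by omega), hk0eq]
        exact Nat.find_spec hT0ex
      have hc1 : cost w0 T0 π' ≤ (pathWeight w0 π' k0 : ℕ∞) := cost_le_pathWeight hπ'k0
      have hc2 : pathWeight w0 π' k0 = pathWeight w0 (fun j => π (iotaFun l j)) k0 :=
        pathWeight_congr (fun k hk => hagree k (by omega))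
      have hc3 := delta_zero hPl w0 k0
      have hc4 : pathWeight w0 π (iotaFun l k0) ≤ pathWeight w0 π n0 :=
        pathWeight_mono w0 π hk0le
      have hc5 : cost w0 T0 π = (pathWeight w0 π n0 : ℕ∞) :=
        cost_eq_of_first (Nat.find_spec hT0ex) (fun k hk => Nat.find_min hT0ex hk)
      refine le_trans hc1 (le_trans ?_ (le_trans (le_of_eq hc5.symm) hcost))
      exact_mod_cast by omega
    refine ⟨π', a, b, hπ'play, hπ'0, hπ'lasso, habound, hνlen, hcost0, ?_⟩
    -- deviations
    intro m v hm hEv hvne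
    by_cases hma : m < a₀
    · -- pseudo transfer
      apply devwin_K2 hE V0 v0 w T σ0 π hstrat hplay h0 hcons hpar π' m (iotaFun l m) v
      · rw [← hagree m (by omega)]; exact hm
      · rw [← hagree m (by omega)]; exact hEv
      · intro ρ hlt
        apply transfer w T π π' ρ m (iotaFun l m) (hagree m (by omega))
        · intro i
          obtain ⟨k1, hk1, hk1T, hk1le⟩ := hhitT i
          exact classify hPl (hINF i) (show k1 ≤ a by omega) hagree hk1T hk1le
            le_rfl (by omega) (Or.inr rfl)
        · exact hlt
    · -- all components realized: trivial objective
      apply devwin_trivial hE V0 v0 w T π' m v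
      intro ρ hlt
      rw [pay_concat_eq w T π' ρ m ?_] at hlt
      · exact absurd hlt (lt_irrefl _)
      · intro i
        obtain ⟨k1, hk1, hk1T, _⟩ := hhitT i
        exact ⟨k1, by omega, hk1T⟩
  -- ============ CASE B : some environment objective unreachable ============
  · push_neg at hINF
    obtain ⟨iInf, hiInf⟩ := hINF
    have ht1 : 1 ≤ t := iInf.pos
    have hsB : L.length ≤ t := by
      rw [hLdef, Finset.length_sort, hM]
      have hsub : (Finset.univ.filter (fun i : Fin t => ∃ n, π n ∈ T i))
          ⊆ Finset.univ.erase iInf := by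
        intro i hi
        rw [Finset.mem_filter] at hi
        rw [Finset.mem_erase]
        refine ⟨?_, Finset.mem_univ _⟩
        rintro rfl
        obtain ⟨n, hn⟩ := hi.2
        exact hiInf n hn
      have h1 := Finset.card_le_card hsub
      have h2 : (Finset.univ.erase iInf).card = t - 1 := by
        rw [Finset.card_erase_of_mem (Finset.mem_univ _), Finset.card_univ, Fintype.card_fin]
      have h3 := Finset.card_image_le (s := Finset.univ.filter
        (fun i : Fin t => ∃ n, π n ∈ T i)) (f := findT)
      calc (insert n0 ((Finset.univ.filter (fun i : Fin t => ∃ n, π n ∈ T i)).image findT)).card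
          ≤ _ + 1 := Finset.card_insert_le _ _
        _ ≤ t := by omega
    obtain ⟨l, hPl, hmile, hlastl, hlel, hlenl⟩ := main ∅ (by simp)
    simp only [Finset.card_empty, Nat.zero_add, Nat.mul_one] at hlenl
    set p1 := l.getLastD 0 with hp1def
    have hstr : ∀ j, iotaFun l (l.length + j) = p1 + j := by
      intro j
      rw [iota_straight, hp1def]
    have hQB : ∃ k, 1 ≤ k ∧ ∃ u, p1 ≤ u ∧ u < p1 + k ∧ π u = π (p1 + k) := by
      obtain ⟨j, j', hjj, hj'cV, heq⟩ := pigeon π p1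
      exact ⟨j', by omega, ⟨p1 + j, by omega, by omega, heq⟩⟩
    set qB := Nat.find hQB with hqBdef
    have hqB1 : 1 ≤ qB := (Nat.find_spec hQB).1
    have hqBcV : qB ≤ cV := by
      obtain ⟨j, j', hjj, hj'cV, heq⟩ := pigeon π p1
      exact le_trans (Nat.find_le ⟨by omega, ⟨p1 + j, by omega, by omega, heq⟩⟩) hj'cV
    obtain ⟨u1, hu1ge, hu1lt, hu1eq⟩ := (Nat.find_spec hQB).2
    set a := l.length + (u1 - p1) with hadef
    set b := p1 + qB - u1 with hbdef
    have hb1 : 1 ≤ b := by omega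
    have hbqB : b ≤ qB := by omega
    have hιa : iotaFun l a = u1 := by
      rw [hadef, hstr]
      omega
    have hιab : ∀ j, iotaFun l (a + j) = u1 + j := by
      intro j
      have h1 : a + j = l.length + (u1 - p1 + j) := by omega
      rw [h1, hstr]
      omega
    have hwrapval : π (iotaFun l (a + b)) = π (iotaFun l a) := by
      rw [hιab b, hιa, show u1 + b = p1 + qB by omega, ← hu1eq]
    set ν : List V := (List.range b).map (fun j => π (iotaFun l (a + j))) with hνdef
    have hνlen : ν.length = b := by simp [hνdef]
    have hνne : ν ≠ [] := by
      intro hcon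
      rw [hcon] at hνlen
      simp at hνlen
      omega
    have hνgetD : ∀ j < b, ν.getD j (π 0) = π (iotaFun l (a + j)) := by
      intro j hj
      rw [hνdef, List.getD_eq_getElem _ _ (by simpa [hνdef] using hj)]
      simp
    have hνhead : ν.head? = some (π (iotaFun l a)) := by
      rw [List.head?_eq_getElem?, hνdef, List.getElem?_map,
        List.getElem?_range (by omega : 0 < b)]
      simp
    have hνchain : List.Chain' E ν := by
      unfold List.Chain'
      rw [hνdef, List.isChain_map, show b = (b - 1) + 1 by omega, List.isChain_range_succ]
      intro i _
      rw [show a + (i + 1) = (a + i) + 1 by omega]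
      exact iota_edge hPl hplay (a + i)
    have hνlast : ν.getLast? = some (π (iotaFun l (a + (b - 1)))) := by
      rw [List.getLast?_eq_getElem?, hνdef]
      simp only [List.length_map, List.length_range]
      rw [List.getElem?_map, List.getElem?_range (by omega : b - 1 < b)]
      simp
    have hνwrap : ∀ x, ν.getLast? = some x → E x (π (iotaFun l a)) := by
      intro x hx
      rw [hνlast] at hx
      injection hx with hx
      subst hx
      have h1 := iota_edge hPl hplay (a + (b - 1))
      rw [show a + (b - 1) + 1 = a + b by omega, hwrapval] at h1
      exact h1
    set π' := lassoPlay π l a ν with hπ'def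
    have hagree0 : ∀ m ≤ a, π' m = π (iotaFun l m) := lassoPlay_agree hνne hνhead
    have hagree : ∀ m ≤ a + b, π' m = π (iotaFun l m) := by
      intro m hm
      by_cases h1 : m ≤ a
      · exact hagree0 m h1
      · rw [hπ'def, lassoPlay_loop (by omega)]
        by_cases h2 : m < a + b
        · have h3 : (m - a) % ν.length = m - a := by
            rw [hνlen]
            exact Nat.mod_eq_of_lt (by omega)
          rw [h3, hνgetD (m - a) (by omega), show a + (m - a) = m by omega]
        · have hmab : m = a + b := by omega
          have h3 : (m - a) % ν.length = 0 := by
            rw [hνlen, hmab]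
            simp
          rw [h3, hνgetD 0 (by omega), show a + 0 = a by omega, hmab]
          exact hwrapval.symm
    have hval : ∀ j, ∃ u, π' j = π u := by
      intro j
      by_cases h1 : j ≤ a + b
      · exact ⟨iotaFun l j, hagree j h1⟩
      · refine ⟨iotaFun l (a + (j - a) % b), ?_⟩
        rw [hπ'def, lassoPlay_loop (by omega)]
        have h2 : (j - a) % ν.length = (j - a) % b := by rw [hνlen]
        rw [h2, hνgetD _ (Nat.mod_lt _ (by omega))]
    have hπ'play : IsPlay E π' := lassoPlay_isPlay hPl hplay hνne hνhead hνchain hνwrap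
    have hπ'0 : π' 0 = v0 := by rw [hagree0 0 (Nat.zero_le _), iota_zero, h0]
    have hπ'lasso : IsLasso π' a ν.length := lassoPlay_lasso hνne hνhead
    have hhitT : ∀ (i : Fin t) (h : ∃ n, π n ∈ T i),
        ∃ k ≤ l.length, π' k ∈ T i ∧ iotaFun l k ≤ Nat.find h := by
      intro i h
      obtain ⟨k, hk, hkeq, hkle⟩ := hmile (Nat.find h) (hfindTL i h)
      exact ⟨k, hk, by rw [hagree0 k (by omega), hkeq]; exact Nat.find_spec h, hkle⟩
    have hcost0 : cost w0 T0 π' ≤ (c : ℕ∞) := by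
      obtain ⟨k0, hk0, hk0eq, hk0le⟩ := hmile n0 hn0L
      have hπ'k0 : π' k0 ∈ T0 := by
        rw [hagree0 k0 (by omega), hk0eq]
        exact Nat.find_spec hT0ex
      have hc1 : cost w0 T0 π' ≤ (pathWeight w0 π' k0 : ℕ∞) := cost_le_pathWeight hπ'k0
      have hc2 : pathWeight w0 π' k0 = pathWeight w0 (fun j => π (iotaFun l j)) k0 :=
        pathWeight_congr (fun k hk => hagree0 k (by omega))
      have hc3 := delta_zero hPl w0 k0
      have hc4 : pathWeight w0 π (iotaFun l k0) ≤ pathWeight w0 π n0 :=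
        pathWeight_mono w0 π hk0le
      have hc5 : cost w0 T0 π = (pathWeight w0 π n0 : ℕ∞) :=
        cost_eq_of_first (Nat.find_spec hT0ex) (fun k hk => Nat.find_min hT0ex hk)
      refine le_trans hc1 (le_trans ?_ (le_trans (le_of_eq hc5.symm) hcost))
      exact_mod_cast by omega
    have habound : a ≤ (t + 1) * cV := by
      have hLcV : L.length * cV ≤ t * cV := Nat.mul_le_mul_right cV hsB
      have hring : (t + 1) * cV = t * cV + cV := by ring
      omega
    have hbbound : ν.length ≤ cV := by
      rw [hνlen]
      omega
    refine ⟨π', a, ν.length, hπ'play, hπ'0, hπ'lasso, habound, hbbound, hcost0, ?_⟩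
    intro m v hm hEv hvne
    set mb := if m < a + b then m else a + (m - a) % b with hmbdef
    have hmbm : mb ≤ m := by
      rw [hmbdef]
      split_ifs with h
      · exact le_rfl
      · have := Nat.mod_le (m - a) b
        omega
    have hmbab : mb ≤ a + b := by
      rw [hmbdef]
      split_ifs with h
      · omega
      · have := Nat.mod_lt (m - a) (show 0 < b by omega)
        omega
    have hπ'mb : π' m = π (iotaFun l mb) := by
      rw [hmbdef]
      split_ifs with h
      · exact hagree m (by omega)
      · rw [hπ'def, lassoPlay_loop (by omega)]
        have h2 : (m - a) % ν.length = (m - a) % b := by rw [hνlen]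
        rw [h2, hνgetD _ (Nat.mod_lt _ (by omega))]
    apply devwin_K2 hE V0 v0 w T σ0 π hstrat hplay h0 hcons hpar π' m (iotaFun l mb) v
    · rw [← hπ'mb]; exact hm
    · rw [← hπ'mb]; exact hEv
    · intro ρ hlt
      apply transfer w T π π' ρ m (iotaFun l mb) hπ'mb
      · intro i
        by_cases hTi : ∃ n, π n ∈ T i
        · obtain ⟨k1, hk1, hk1T, hk1le⟩ := hhitT i hTi
          apply classify hPl hTi (show k1 ≤ a + b by omega) hagree hk1T hk1le hmbm hmbab
          by_cases h : m < a + b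
          · right
            rw [hmbdef, if_pos h]
          · left
            rw [hmbdef, if_neg h]
            omega
        · exact Or.inr (classify_inf (fun n hn => hTi ⟨n, hn⟩) hval m (iotaFun l mb))
      · exact hlt

end CPS

/-- There are a strategy `σ0` of player 0 and a `σ0`-fixed Pareto-optimal play `π`
with `cost₀ π ≤ c` iff there is a lasso play `π' = μ (ν)^ω` from `v0` with
`|μ| ≤ (t+1)|V|`, `|ν| ≤ |V|` and `cost₀ π' ≤ c` such that, for every deviation `hv`
of `π'` with `last h` owned by the environment, player 0 wins from `v` for the
objective `¬(pay(h·ρ) < pay π')`. -/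
theorem cps_characterization {V : Type*} [Fintype V] (E : V → V → Prop)
    (hE : ∀ u, ∃ v, E u v) (V0 : Set V) (v0 : V) (t : ℕ)
    (w0 : V → V → ℕ) (T0 : Set V) (w : Fin t → V → V → ℕ) (T : Fin t → Set V)
    (c : ℕ) :
    (∃ (σ0 : List V → V) (π : ℕ → V), IsStrategy E V0 σ0 ∧ IsPlay E π ∧ π 0 = v0 ∧
        PlayConsistent V0 σ0 π ∧ ParetoOptimal E V0 v0 w T σ0 π ∧
        cost w0 T0 π ≤ (c : ℕ∞)) ↔
      (∃ (π' : ℕ → V) (a b : ℕ), IsPlay E π' ∧ π' 0 = v0 ∧ IsLasso π' a b ∧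
        a ≤ (t + 1) * Fintype.card V ∧ b ≤ Fintype.card V ∧
        cost w0 T0 π' ≤ (c : ℕ∞) ∧
        ∀ (m : ℕ) (v : V), π' m ∉ V0 → E (π' m) v → v ≠ π' (m + 1) →
          Player0Wins E V0 v
            (fun ρ => ¬ pay w T (concatPlay (histList π' m) ρ) < pay w T π')) := by
  constructor
  · rintro ⟨σ0, π, hstrat, hplay, h0, hcons, hpar, hcost⟩
    exact CPS.forward E hE V0 v0 w0 T0 w T c σ0 π hstrat hplay h0 hcons hpar hcost
  · rintro ⟨π', a, b, hplay, h0, hlasso, ha, hb, hcost, hdev⟩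
    exact ⟨CPS.backStrat hE V0 v0 w T π' hdev, π',
      CPS.backStrat_isStrategy hE V0 v0 w T π' hdev hplay, hplay, h0,
      CPS.backStrat_consistent hE V0 v0 w T π' hdev,
      CPS.backStrat_pareto hE V0 v0 w T π' hdev hplay h0, hcost⟩
end

section
/- Let G be a quantitative reachability game with players P = {0,1,…,t}, vertex set V, initial vertex v_0, and let c ∈ ℕ. If there exists a play π from v_0 that is Visit Val*-consistent for P∖{0} and satisfies cost_0(π) ≤ c, then there exists a lasso play π′ = μ(ν)^ω from v_0 that is Visit Val*-consistent for P∖{0}, satisfies cost_0(π′) ≤ c, and has |μ| ≤ (|P|+1)·|V| and |ν| ≤ |V|. -/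
/-!
First make the play a lasso: after the last time `B` at which some player first reaches its
target, some vertex repeats within `|V| + 1` steps, and looping on that cycle forever changes
nothing for a player `i ≠ 0` who is still to move without having reached `T i`: such a player
never reaches `T i` in the original play, so `Val_i` is `+∞` at every vertex it owns there.
Then shorten the stem: as long as it has more than `(|P| + 1)·|V|` positions, two positions
carry the same vertex and the same set of players that have already reached their target, and
cutting out the cycle between them lowers every remaining cost while keeping the play Visit
`Val*`-consistent.
-/

open scoped Classical

/-- `σ` is a strategy for player `i` in a game where `own v` is the owner of `v`. -/
def IsStrategyFor {V P : Type*} (E : V → V → Prop) (own : V → P) (i : P)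
    (σ : List V → V) : Prop :=
  ∀ (l : List V) (u : V), List.Chain' E (l ++ [u]) → own u = i → E u (σ (l ++ [u]))

/-- A play is consistent with the strategy `σ` of player `i`. -/
def ConsistentFor {V P : Type*} (own : V → P) (i : P) (σ : List V → V)
    (π : ℕ → V) : Prop :=
  ∀ k, own (π k) = i → π (k + 1) = σ (histList π k)

/-- A play is the outcome of the strategy profile `σ`: at each step the owner's
strategy chooses the next vertex. -/
def ProfConsistent {V P : Type*} (own : V → P) (σ : P → List V → V)
    (π : ℕ → V) : Prop :=
  ∀ k, π (k + 1) = σ (own (π k)) (histList π k)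

/-- The value `Val_i(v)` of vertex `v` for player `i` against the coalition of the
other players: the inf over strategies of player `i` of the sup of the costs of the
plays from `v` consistent with that strategy. -/
noncomputable def Val {V P : Type*} (E : V → V → Prop) (own : V → P)
    (w : P → V → V → ℕ) (T : P → Set V) (i : P) (v : V) : ℕ∞ :=
  ⨅ σ : {σ : List V → V // IsStrategyFor E own i σ},
    ⨆ π : {π : ℕ → V // IsPlay E π ∧ π 0 = v ∧ ConsistentFor own i σ.1 π},
      cost (w i) (T i) π.1

/-- `π` is Visit `Val*`-consistent for the set `I` of players. -/
def VisitValConsistent {V P : Type*} (E : V → V → Prop) (own : V → P)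
    (w : P → V → V → ℕ) (T : P → Set V) (I : Set P) (π : ℕ → V) : Prop :=
  ∀ i ∈ I, ∀ n, own (π n) = i → (¬ ∃ k < n, π k ∈ T i) →
    cost (w i) (T i) (fun m => π (n + m)) ≤ Val E own w T i (π n)


section Cost

variable {V : Type*} (w : V → V → ℕ) {T : Set V} {x y : ℕ → V}

lemma pathWeight_add (x : ℕ → V) (m n : ℕ) :
    pathWeight w x (m + n) = pathWeight w x m + pathWeight w (fun k => x (m + k)) n := by
  simp only [pathWeight, Finset.sum_range_add, add_assoc]

lemma pathWeight_mono (x : ℕ → V) : Monotone (pathWeight w x) := fun _ _ h =>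
  Finset.sum_le_sum_of_subset (Finset.range_subset_range.2 h)

lemma pathWeight_congr {n : ℕ} (h : ∀ k ≤ n, x k = y k) :
    pathWeight w x n = pathWeight w y n :=
  Finset.sum_congr rfl fun k hk => by
    rw [Finset.mem_range] at hk
    rw [h k hk.le, h (k + 1) hk]

lemma cost_le_pathWeight {n : ℕ} (hn : x n ∈ T) : cost w T x ≤ pathWeight w x n := by
  rw [cost, dif_pos ⟨n, hn⟩]
  exact_mod_cast pathWeight_mono w x (Nat.find_min' _ hn)

lemma cost_eq_top (h : ∀ n, x n ∉ T) : cost w T x = ⊤ := by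
  rw [cost, dif_neg (not_exists.2 h)]

lemma exists_cost_eq (h : ∃ n, x n ∈ T) :
    ∃ f, x f ∈ T ∧ (∀ k < f, x k ∉ T) ∧ cost w T x = pathWeight w x f :=
  ⟨Nat.find h, Nat.find_spec h, fun _ => Nat.find_min h, by rw [cost, dif_pos h]⟩

lemma cost_le_of_eqOn {e : ℕ} (he : y e ∈ T) (h : ∀ k ≤ e, x k = y k) :
    cost w T x ≤ cost w T y := by
  obtain ⟨f, hf, hmin, hcost⟩ := exists_cost_eq w ⟨e, he⟩
  have hfe : f ≤ e := not_lt.1 fun hlt => hmin e hlt he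
  rw [hcost, ← pathWeight_congr w fun k hk => h k (hk.trans hfe)]
  exact cost_le_pathWeight w (by rwa [h f hfe])

lemma cost_le_of_skip {e d : ℕ} (hxy : ∀ k ≤ e, x k = y k)
    (hskip : ∀ k, x (e + k) = y (e + d + k))
    (hT : ∀ k, e < k → k < e + d → y k ∈ T → ∃ k' ≤ e, y k' ∈ T) :
    cost w T x ≤ cost w T y := by
  by_cases hy : ∃ n, y n ∈ T
  swap
  · rw [cost_eq_top w (not_exists.1 hy)]
    exact le_top
  obtain ⟨f, hf, hmin, hcost⟩ := exists_cost_eq w hy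
  by_cases hfe : f ≤ e
  · exact cost_le_of_eqOn w hf fun k hk => hxy k (hk.trans hfe)
  obtain ⟨l, rfl⟩ : ∃ l, f = e + d + l := by
    refine ⟨f - (e + d), (Nat.add_sub_cancel' (not_lt.1 fun hlt => ?_)).symm⟩
    obtain ⟨k', hk', hk'T⟩ := hT f (by omega) hlt hf
    exact hmin k' (by omega) hk'T
  have hweight : pathWeight w x (e + l) ≤ pathWeight w y (e + d + l) := by
    rw [pathWeight_add, pathWeight_add, pathWeight_add, pathWeight_congr w hxy]
    simp only [hskip, add_assoc]
    exact Nat.add_le_add_left (Nat.le_add_left _ _) _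
  rw [hcost]
  exact (cost_le_pathWeight w (by rwa [hskip])).trans (by exact_mod_cast hweight)

lemma cost_shift_le {m : ℕ} (h : ¬ ∃ k < m, x k ∈ T) :
    cost w T (fun k => x (m + k)) ≤ cost w T x := by
  by_cases hx : ∃ n, x n ∈ T
  swap
  · rw [cost_eq_top w (not_exists.1 hx)]
    exact le_top
  obtain ⟨f, hf, -, hcost⟩ := exists_cost_eq w hx
  obtain ⟨l, rfl⟩ : ∃ l, f = m + l := ⟨f - m, by grind⟩
  rw [hcost, pathWeight_add]
  exact (cost_le_pathWeight w (x := fun k => x (m + k)) hf).trans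
    (by exact_mod_cast Nat.le_add_left _ _)

end Cost

section Shortcut

variable {V P : Type*} (w : P → V → V → ℕ) (T : P → Set V)

def IsShortcut (π ρ : ℕ → V) : Prop :=
  ∀ i n, (¬ ∃ k < n, ρ k ∈ T i) → ∃ m, π m = ρ n ∧ (¬ ∃ k < m, π k ∈ T i) ∧
    cost (w i) (T i) (fun k => ρ (n + k)) ≤ cost (w i) (T i) (fun k => π (m + k))

variable {w T} {π ρ σ : ℕ → V}

lemma IsShortcut.refl (π : ℕ → V) : IsShortcut w T π π :=
  fun _ n hn => ⟨n, rfl, hn, le_rfl⟩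

lemma IsShortcut.trans (h₁ : IsShortcut w T π ρ) (h₂ : IsShortcut w T ρ σ) :
    IsShortcut w T π σ := by
  intro i n hn
  obtain ⟨m, hm, hmv, hc⟩ := h₂ i n hn
  obtain ⟨m', hm', hm'v, hc'⟩ := h₁ i m hmv
  exact ⟨m', hm'.trans hm, hm'v, hc.trans hc'⟩

lemma IsShortcut.cost_le (h : IsShortcut w T π ρ) (i : P) :
    cost (w i) (T i) ρ ≤ cost (w i) (T i) π := by
  obtain ⟨m, -, hm, hc⟩ := h i 0 (by simp)
  simpa using hc.trans (cost_shift_le (w i) hm)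

lemma VisitValConsistent.of_isShortcut {E : V → V → Prop} {own : V → P} {I : Set P}
    (hπ : VisitValConsistent E own w T I π) (h : IsShortcut w T π ρ) :
    VisitValConsistent E own w T I ρ := by
  intro i hi n hown hn
  obtain ⟨m, hm, hmv, hc⟩ := h i n hn
  rw [← hm] at hown ⊢
  exact hc.trans (hπ i hi m hown hmv)

lemma IsPlay.comp {E : V → V → Prop} {g : ℕ → ℕ} (hπ : IsPlay E π)
    (hg : ∀ n, π (g (n + 1)) = π (g n + 1)) : IsPlay E (π ∘ g) := fun n => by
  simpa only [Function.comp_apply, hg] using hπ (g n)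

end Shortcut

section Lasso

variable {V P : Type*} {w : P → V → V → ℕ} {T : P → Set V} {π : ℕ → V} {p b : ℕ}

/-- Reindexing of `π` into the lasso `π 0 ⋯ π (p-1) (π p ⋯ π (p+b-1))^ω`. -/
def lassoIndex (p b n : ℕ) : ℕ := if n < p then n else p + (n - p) % b

lemma lassoIndex_of_le {n : ℕ} (h : n ≤ p) : lassoIndex p b n = n := by
  rcases h.lt_or_eq with h | rfl <;> simp [lassoIndex, h]

lemma comp_lassoIndex_succ (hcyc : π (p + b) = π p) (n : ℕ) :
    π (lassoIndex p b (n + 1)) = π (lassoIndex p b n + 1) := by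
  by_cases hn : n < p
  · rw [lassoIndex_of_le hn, lassoIndex_of_le hn.le]
  simp only [lassoIndex, if_neg hn, if_neg (show ¬ n + 1 < p by omega)]
  have hsplit : n + 1 - p = b * ((n - p) / b) + ((n - p) % b + 1) := by
    have := Nat.div_add_mod (n - p) b
    omega
  rw [hsplit, Nat.mul_add_mod]
  rcases Nat.eq_zero_or_pos b with rfl | hb
  · simp only [Nat.mod_zero, add_assoc]
  rcases (show (n - p) % b + 1 ≤ b from Nat.mod_lt (n - p) hb).lt_or_eq with hlt | heq
  · rw [Nat.mod_eq_of_lt hlt, add_assoc]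
  · rw [heq, Nat.mod_self, add_zero, add_assoc, heq, hcyc]

lemma isLasso_comp_lassoIndex (hb : 0 < b) : IsLasso (π ∘ lassoIndex p b) p b := by
  refine ⟨hb, fun k hk => ?_⟩
  simp only [Function.comp_apply, lassoIndex, if_neg (show ¬ k < p by omega),
    if_neg (show ¬ k + b < p by omega), show k + b - p = k - p + b by omega, Nat.add_mod_right]

lemma isShortcut_comp_lassoIndex (hvis : ∀ i k, π k ∈ T i → ∃ k' ≤ p, π k' ∈ T i) :
    IsShortcut w T π (π ∘ lassoIndex p b) := by
  intro i n hn
  by_cases hi : ∃ k, π k ∈ T i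
  · obtain ⟨k', hk'p, hk'⟩ := hvis i _ hi.choose_spec
    have hnk' : n ≤ k' := not_lt.1 fun hlt =>
      hn ⟨k', hlt, by simpa [lassoIndex_of_le hk'p] using hk'⟩
    refine ⟨n, by simp [lassoIndex_of_le (hnk'.trans hk'p)], ?_, ?_⟩
    · rintro ⟨k, hk, hkT⟩
      exact hn ⟨k, hk, by simpa [lassoIndex_of_le (show k ≤ p by omega)] using hkT⟩
    · refine cost_le_of_eqOn (w i) (e := k' - n) (by rwa [Nat.add_sub_cancel' hnk']) ?_
      intro k hk
      simp [lassoIndex_of_le (show n + k ≤ p by omega)]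
  · refine ⟨lassoIndex p b n, rfl, fun ⟨k, _, hk⟩ => hi ⟨k, hk⟩, ?_⟩
    rw [cost_eq_top (w i) fun k hk => hi ⟨_, hk⟩]
    exact le_top

end Lasso

section Skip

variable {V P : Type*} {w : P → V → V → ℕ} {T : P → Set V} {π : ℕ → V} {p d : ℕ}

/-- `π ∘ skipIndex p d` is `π` with `π (p+1) ⋯ π (p+d)` cut out. -/
def skipIndex (p d n : ℕ) : ℕ := if n < p then n else n + d

lemma skipIndex_of_ge {n : ℕ} (h : p ≤ n) : skipIndex p d n = n + d :=
  if_neg (not_lt.2 h)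

lemma comp_skipIndex_of_le (hcyc : π (p + d) = π p) {n : ℕ} (h : n ≤ p) :
    π (skipIndex p d n) = π n := by
  rcases h.lt_or_eq with h | rfl
  · rw [skipIndex, if_pos h]
  · rw [skipIndex_of_ge le_rfl, hcyc]

lemma comp_skipIndex_succ (hcyc : π (p + d) = π p) (n : ℕ) :
    π (skipIndex p d (n + 1)) = π (skipIndex p d n + 1) := by
  by_cases hn : n < p
  · rw [comp_skipIndex_of_le hcyc hn, skipIndex, if_pos hn]
  · rw [skipIndex_of_ge (by omega), skipIndex_of_ge (by omega), Nat.add_right_comm]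

lemma IsLasso.comp_skipIndex {a b : ℕ} (h : IsLasso π a b) (hpa : p + d ≤ a) :
    IsLasso (π ∘ skipIndex p d) (a - d) b := by
  refine ⟨h.1, fun k hk => ?_⟩
  simp only [Function.comp_apply, skipIndex_of_ge (show p ≤ k + b by omega),
    skipIndex_of_ge (show p ≤ k by omega), Nat.add_right_comm k b d]
  exact h.2 (k + d) (by omega)

lemma isShortcut_comp_skipIndex (hcyc : π (p + d) = π p)
    (hvis : ∀ i k, k ≤ p + d → π k ∈ T i → ∃ k' ≤ p, π k' ∈ T i) :
    IsShortcut w T π (π ∘ skipIndex p d) := by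
  intro i n hn
  have hlate : ∀ k ≤ p + d, π k ∈ T i → ∃ k', n ≤ k' ∧ k' ≤ p ∧ π k' ∈ T i := by
    intro k hk hkT
    obtain ⟨k', hk'p, hk'T⟩ := hvis i k hk hkT
    refine ⟨k', not_lt.1 fun hlt => hn ⟨k', hlt, ?_⟩, hk'p, hk'T⟩
    rwa [Function.comp_apply, comp_skipIndex_of_le hcyc hk'p]
  by_cases hnp : n ≤ p
  · refine ⟨n, (comp_skipIndex_of_le hcyc hnp).symm, ?_, ?_⟩
    · rintro ⟨k, hk, hkT⟩
      exact hn ⟨k, hk, by rwa [Function.comp_apply, comp_skipIndex_of_le hcyc (by omega)]⟩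
    · refine cost_le_of_skip (w i) (e := p - n) (d := d)
        (fun k hk => comp_skipIndex_of_le hcyc (by omega)) (fun k => ?_) (fun k hk hkd hkT => ?_)
      · rw [Function.comp_apply, skipIndex_of_ge (by omega)]
        congr 1
        omega
      · obtain ⟨k', hnk', hk'p, hk'T⟩ := hlate (n + k) (by omega) hkT
        exact ⟨k' - n, by omega, by rwa [Nat.add_sub_cancel' hnk']⟩
  · refine ⟨n + d, by rw [Function.comp_apply, skipIndex_of_ge (by omega)], ?_, le_of_eq ?_⟩
    · rintro ⟨k, hk, hkT⟩
      by_cases hkp : k ≤ p + d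
      · obtain ⟨k', hnk', hk'p, -⟩ := hlate k hkp hkT
        omega
      · refine hn ⟨k - d, by omega, ?_⟩
        rwa [Function.comp_apply, skipIndex_of_ge (by omega), Nat.sub_add_cancel (by omega)]
    · congr 1
      funext k
      rw [Function.comp_apply, skipIndex_of_ge (by omega), Nat.add_right_comm]

end Skip

lemma Finset.exists_lt_map_eq_of_card_lt {α β : Type*} [LinearOrder α] {s : Finset α}
    {t : Finset β} {f : α → β} (hc : t.card < s.card) (hf : Set.MapsTo f s t) :
    ∃ x ∈ s, ∃ y ∈ s, x < y ∧ f x = f y := by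
  obtain ⟨x, hx, y, hy, hne, hxy⟩ := Finset.exists_ne_map_eq_of_card_lt_of_maps_to hc hf
  rcases hne.lt_or_gt with h | h
  · exact ⟨x, hx, y, hy, h, hxy⟩
  · exact ⟨y, hy, x, hx, h, hxy.symm⟩

section Existence

variable {V P : Type*} {E : V → V → Prop} (w : P → V → V → ℕ) (T : P → Set V)

lemma exists_bound_first_visits [Finite P] (π : ℕ → V) :
    ∃ B, ∀ i k, π k ∈ T i → ∃ k' ≤ B, π k' ∈ T i := by
  have hbound : ∀ i, ∃ B, ∀ k, π k ∈ T i → ∃ k' ≤ B, π k' ∈ T i := fun i => by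
    by_cases h : ∃ k, π k ∈ T i
    · obtain ⟨k, hk⟩ := h
      exact ⟨k, fun _ _ => ⟨k, le_rfl, hk⟩⟩
    · exact ⟨0, fun k hk => (h ⟨k, hk⟩).elim⟩
  choose B hB using hbound
  obtain ⟨M, hM⟩ := Finite.exists_le B
  exact ⟨M, fun i k hk =>
    let ⟨k', hk', hk'T⟩ := hB i k hk
    ⟨k', hk'.trans (hM i), hk'T⟩⟩

lemma exists_cycle_after [Fintype V] (π : ℕ → V) (B : ℕ) :
    ∃ p d, B ≤ p ∧ 0 < d ∧ d ≤ Fintype.card V ∧ π (p + d) = π p := by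
  obtain ⟨p, hp, q, hq, hpq, hcyc⟩ := Finset.exists_lt_map_eq_of_card_lt
    (s := Finset.Icc B (B + Fintype.card V)) (t := Finset.univ) (f := π)
    (by simp; omega) (fun _ _ => Finset.mem_coe.2 (Finset.mem_univ _))
  rw [Finset.mem_Icc] at hp hq
  exact ⟨p, q - p, hp.1, by omega, by omega, by rw [Nat.add_sub_cancel' hpq.le, hcyc]⟩

noncomputable def visited [Fintype P] (π : ℕ → V) (n : ℕ) : Finset P :=
  Finset.univ.filter fun i => ∃ k ≤ n, π k ∈ T i

lemma visited_mono [Fintype P] (π : ℕ → V) : Monotone (visited T π) :=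
  fun _ _ h i => by
    simp only [visited, Finset.mem_filter, Finset.mem_univ, true_and]
    exact fun ⟨k, hk, hkT⟩ => ⟨k, hk.trans h, hkT⟩

lemma exists_cycle_without_first_visits [Fintype P] [Fintype V] (π : ℕ → V) {a : ℕ}
    (ha : (Fintype.card P + 1) * Fintype.card V ≤ a) :
    ∃ p d, 0 < d ∧ p + d ≤ a ∧ π (p + d) = π p ∧
      ∀ i k, k ≤ p + d → π k ∈ T i → ∃ k' ≤ p, π k' ∈ T i := by
  obtain ⟨p, hp, q, hq, hpq, h⟩ := Finset.exists_lt_map_eq_of_card_lt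
    (s := Finset.range (a + 1)) (t := Finset.range (Fintype.card P + 1) ×ˢ Finset.univ)
    (f := fun n => ((visited T π n).card, π n)) (by simpa using Nat.lt_succ_of_le ha)
    (fun n _ => by simpa [Nat.lt_succ_iff] using Finset.card_le_univ (visited T π n))
  rw [Prod.mk.injEq] at h
  have hvis : visited T π p = visited T π q :=
    Finset.eq_of_subset_of_card_le (visited_mono T π hpq.le) h.1.ge
  refine ⟨p, q - p, by omega, by rw [Finset.mem_range] at hq; omega,
    by rw [Nat.add_sub_cancel' hpq.le, h.2], fun i k hk hkT => ?_⟩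
  have hi : i ∈ visited T π q := by
    simp only [visited, Finset.mem_filter, Finset.mem_univ, true_and]
    exact ⟨k, by omega, hkT⟩
  rw [← hvis] at hi
  simpa [visited] using hi

lemma exists_lasso_shortcut [Finite P] [Fintype V] {π : ℕ → V} (hπ : IsPlay E π) :
    ∃ ρ p b, IsPlay E ρ ∧ ρ 0 = π 0 ∧ IsLasso ρ p b ∧ b ≤ Fintype.card V ∧
      IsShortcut w T π ρ := by
  obtain ⟨B, hB⟩ := exists_bound_first_visits T π
  obtain ⟨p, b, hBp, hb, hbV, hcyc⟩ := exists_cycle_after π B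
  refine ⟨π ∘ lassoIndex p b, p, b, hπ.comp (comp_lassoIndex_succ hcyc),
    congrArg π (lassoIndex_of_le (Nat.zero_le p)), isLasso_comp_lassoIndex hb, hbV,
    isShortcut_comp_lassoIndex fun i k hk => ?_⟩
  obtain ⟨k', hk', hk'T⟩ := hB i k hk
  exact ⟨k', hk'.trans hBp, hk'T⟩

lemma exists_short_lasso_shortcut [Fintype P] [Fintype V] {π : ℕ → V} {a b : ℕ}
    (hπ : IsPlay E π) (hlasso : IsLasso π a b) :
    ∃ ρ a', IsPlay E ρ ∧ ρ 0 = π 0 ∧ IsLasso ρ a' b ∧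
      a' ≤ (Fintype.card P + 1) * Fintype.card V ∧ IsShortcut w T π ρ := by
  induction a using Nat.strong_induction_on generalizing π with
  | _ a ih =>
    by_cases ha : a ≤ (Fintype.card P + 1) * Fintype.card V
    · exact ⟨π, a, hπ, rfl, hlasso, ha, .refl π⟩
    obtain ⟨p, d, hd, hpd, hcyc, hvis⟩ := exists_cycle_without_first_visits T π (not_le.1 ha).le
    obtain ⟨ρ, a', hρ, hρ0, hρlasso, ha', hρπ⟩ := ih (a - d) (by omega)
      (hπ.comp (comp_skipIndex_succ hcyc)) (hlasso.comp_skipIndex hpd)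
    exact ⟨ρ, a', hρ, hρ0.trans (comp_skipIndex_of_le hcyc (Nat.zero_le p)), hρlasso, ha',
      (isShortcut_comp_skipIndex hcyc hvis).trans hρπ⟩

end Existence

theorem visit_val_consistent_lasso_general {V : Type*} [Fintype V] {t : ℕ}
    (E : V → V → Prop) (own : V → Fin (t + 1))
    (w : Fin (t + 1) → V → V → ℕ) (T : Fin (t + 1) → Set V) (v0 : V) (c : ℕ)
    (h : ∃ π : ℕ → V, IsPlay E π ∧ π 0 = v0 ∧
      VisitValConsistent E own w T {i | i ≠ 0} π ∧ cost (w 0) (T 0) π ≤ (c : ℕ∞)) :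
    ∃ (π' : ℕ → V) (a b : ℕ), IsPlay E π' ∧ π' 0 = v0 ∧ IsLasso π' a b ∧
      VisitValConsistent E own w T {i | i ≠ 0} π' ∧ cost (w 0) (T 0) π' ≤ (c : ℕ∞) ∧
      a ≤ ((t + 1) + 1) * Fintype.card V ∧ b ≤ Fintype.card V := by
  obtain ⟨π, hπ, rfl, hcons, hcost⟩ := h
  obtain ⟨ρ, p, b, hρ, hρ0, hρlasso, hbV, hρπ⟩ := exists_lasso_shortcut w T hπ
  obtain ⟨σ, a, hσ, hσ0, hσlasso, haV, hσρ⟩ := exists_short_lasso_shortcut w T hρ hρlasso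
  have hσπ : IsShortcut w T π σ := hρπ.trans hσρ
  refine ⟨σ, a, b, hσ, hσ0.trans hρ0, hσlasso, hcons.of_isShortcut hσπ,
    (hσπ.cost_le 0).trans hcost, by simpa using haV, hbV⟩

/-- If there is a play from `v0` that is Visit `Val*`-consistent for the players
`≠ 0` with `cost₀ ≤ c`, then there is such a lasso play `μ (ν)^ω` with
`|μ| ≤ (|P|+1)·|V|` and `|ν| ≤ |V|` (here `|P| = t+1`). -/
theorem visit_val_consistent_lasso {V : Type*} [Fintype V] {t : ℕ}
    (E : V → V → Prop) (hE : ∀ u, ∃ v, E u v) (own : V → Fin (t + 1))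
    (w : Fin (t + 1) → V → V → ℕ) (T : Fin (t + 1) → Set V) (v0 : V) (c : ℕ)
    (h : ∃ π : ℕ → V, IsPlay E π ∧ π 0 = v0 ∧
      VisitValConsistent E own w T {i | i ≠ 0} π ∧ cost (w 0) (T 0) π ≤ (c : ℕ∞)) :
    ∃ (π' : ℕ → V) (a b : ℕ), IsPlay E π' ∧ π' 0 = v0 ∧ IsLasso π' a b ∧
      VisitValConsistent E own w T {i | i ≠ 0} π' ∧ cost (w 0) (T 0) π' ≤ (c : ℕ∞) ∧
      a ≤ ((t + 1) + 1) * Fintype.card V ∧ b ≤ Fintype.card V :=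
  visit_val_consistent_lasso_general E own w T v0 c h
end
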